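/- arXiv:2309.16070 — 5 statements merged into one kernel-verified Lean document; each statement's English description precedes it below -/
import Mathlib

section
/- A semi-metric space (X, d_X) has p-negative type if and only if it has p-negative type with distortion 1. -/
open Matrix

def IsSemiMetric {X : Type*} (d : X → X → ℝ) : Prop :=
  (∀ x y, d x y = d y x) ∧ (∀ x y, 0 ≤ d x y) ∧ (∀ x y, d x y = 0 ↔ x = y)

def MemO {n : ℕ} (Q : Matrix (Fin n) (Fin n) ℝ) : Prop :=
  Q.PosSemidef ∧ Q *ᵥ (fun _ => (1 : ℝ)) = 0

noncomputable def distortedSum {X : Type*} (d : X → X → ℝ) (p : ℝ) {n : ℕ}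
    (x : Fin n → X) (Q : Matrix (Fin n) (Fin n) ℝ) (C : ℝ) : ℝ :=
  (∑ i, ∑ j, if 0 < Q i j then d (x i) (x j) ^ p * Q i j else 0) +
    C ^ 2 * ∑ i, ∑ j, if Q i j < 0 then d (x i) (x j) ^ p * Q i j else 0

def NegTypeWith {X : Type*} (d : X → X → ℝ) (p C : ℝ) : Prop :=
  ∀ (n : ℕ), 2 ≤ n → ∀ x : Fin n → X, Function.Injective x →
    ∀ Q : Matrix (Fin n) (Fin n) ℝ, MemO Q → distortedSum d p x Q C ≤ 0

def StrictNegTypeWith {X : Type*} (d : X → X → ℝ) (p C : ℝ) : Prop :=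
  ∀ (n : ℕ), 2 ≤ n → ∀ x : Fin n → X, Function.Injective x →
    ∀ Q : Matrix (Fin n) (Fin n) ℝ, MemO Q → Q ≠ 0 → distortedSum d p x Q C < 0

def NegType {X : Type*} (d : X → X → ℝ) (p : ℝ) : Prop :=
  ∀ (n : ℕ), 2 ≤ n → ∀ x : Fin n → X, Function.Injective x →
    ∀ ξ : Fin n → ℝ, ∑ i, ξ i = 0 →
      ∑ i, ∑ j, d (x i) (x j) ^ p * (ξ i * ξ j) ≤ 0

def StrictNegType {X : Type*} (d : X → X → ℝ) (p : ℝ) : Prop :=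
  ∀ (n : ℕ), 2 ≤ n → ∀ x : Fin n → X, Function.Injective x →
    ∀ ξ : Fin n → ℝ, ∑ i, ξ i = 0 → ξ ≠ 0 →
      ∑ i, ∑ j, d (x i) (x j) ^ p * (ξ i * ξ j) < 0

noncomputable def c2 {X : Type*} (d : X → X → ℝ) : ℝ :=
  sInf {C : ℝ | 1 ≤ C ∧ ∃ f : X → lp (fun _ : ℕ => ℝ) 2, ∃ s : ℝ, 0 < s ∧
    ∀ x y, s * d x y ≤ ‖f x - f y‖ ∧ ‖f x - f y‖ ≤ s * C * d x y}

noncomputable def posSum {n : ℕ} (Q : Matrix (Fin n) (Fin n) ℝ) : ℝ :=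
  ∑ i, ∑ j, if 0 < Q i j then Q i j else 0

noncomputable def Delta {n : ℕ} (d : Fin n → Fin n → ℝ) (p C : ℝ) : ℝ :=
  sInf {t : ℝ | ∃ Q : Matrix (Fin n) (Fin n) ℝ, MemO Q ∧ posSum Q = 1 ∧
    t = -(distortedSum d p id Q C)}

lemma distortedSum_one {X : Type*} (d : X → X → ℝ) (p : ℝ) {n : ℕ}
    (x : Fin n → X) (Q : Matrix (Fin n) (Fin n) ℝ) :
    distortedSum d p x Q 1 = ∑ i, ∑ j, d (x i) (x j) ^ p * Q i j := by
  unfold distortedSum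
  rw [one_pow, one_mul, ← Finset.sum_add_distrib]
  refine Finset.sum_congr rfl fun i _ => ?_
  rw [← Finset.sum_add_distrib]
  refine Finset.sum_congr rfl fun j _ => ?_
  rcases lt_trichotomy (Q i j) 0 with h | h | h
  · rw [if_neg (by linarith), if_pos h, zero_add]
  · rw [if_neg (by simp [h]), if_neg (by simp [h]), h, mul_zero, add_zero]
  · rw [if_pos h, if_neg (by linarith), add_zero]

theorem statement4 {X : Type*} (d : X → X → ℝ) (hd : IsSemiMetric d) (p : ℝ) (hp : 0 ≤ p) :
    NegType d p ↔ NegTypeWith d p 1 := by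
  constructor
  · intro h n hn x hx Q hQ
    obtain ⟨hpsd, hone⟩ := hQ
    obtain ⟨m, v, hv⟩ := Matrix.posSemidef_iff_eq_sum_vecMulVec.mp hpsd
    obtain ⟨B, hB⟩ : ∃ B : Matrix (Fin m) (Fin n) ℝ, Q = Bᴴ * B :=
      ⟨Matrix.of fun k i => v k i, by
        ext i j; simp [hv, Matrix.mul_apply, Matrix.vecMulVec_apply, Matrix.sum_apply]⟩
    have hBone : B *ᵥ (fun _ => (1 : ℝ)) = 0 := by
      rw [← dotProduct_self_eq_zero (v := B *ᵥ (fun _ => (1 : ℝ)))]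
      have : (fun _ => (1 : ℝ)) ⬝ᵥ (Q *ᵥ (fun _ => (1 : ℝ))) = 0 := by
        rw [hone]; simp [dotProduct]
      rw [hB, ← Matrix.mulVec_mulVec, Matrix.dotProduct_mulVec] at this
      simpa [Matrix.vecMul_conjTranspose, Matrix.vecMul_transpose] using this
    rw [distortedSum_one]
    have hQij : ∀ i j, Q i j = ∑ k, B k i * B k j := by
      intro i j
      rw [hB]
      simp [Matrix.mul_apply, Matrix.transpose_apply]
    calc ∑ i, ∑ j, d (x i) (x j) ^ p * Q i j
        = ∑ i, ∑ k, ∑ j, d (x i) (x j) ^ p * (B k i * B k j) := by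
          refine Finset.sum_congr rfl fun i _ => ?_
          simp_rw [hQij, Finset.mul_sum]
          exact Finset.sum_comm
      _ = ∑ k, ∑ i, ∑ j, d (x i) (x j) ^ p * (B k i * B k j) := Finset.sum_comm
      _ ≤ 0 := by
          refine Finset.sum_nonpos fun k _ => ?_
          refine h n hn x hx (fun i => B k i) ?_
          have := congrFun hBone k
          simpa [Matrix.mulVec, dotProduct] using this
  · intro h n hn x hx ξ hξ
    set Q : Matrix (Fin n) (Fin n) ℝ := Matrix.of (fun i j => ξ i * ξ j) with hQdef
    have hQapp : ∀ i j, Q i j = ξ i * ξ j := fun i j => rfl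
    have hmemO : MemO Q := by
      constructor
      · refine Matrix.PosSemidef.of_dotProduct_mulVec_nonneg ?_ ?_
        · ext i j
          simp [hQapp, mul_comm, Matrix.conjTranspose_apply]
        · intro v
          have hv : Q *ᵥ v = fun i => ξ i * (∑ j, ξ j * v j) := by
            ext i
            simp [Matrix.mulVec, dotProduct, hQapp, Finset.mul_sum, mul_assoc]
          simp only [star_trivial]
          rw [hv]
          have : v ⬝ᵥ (fun i => ξ i * (∑ j, ξ j * v j))
              = (∑ j, ξ j * v j) * (∑ j, ξ j * v j) := by
            simp only [dotProduct]
            rw [Finset.sum_congr rfl fun i _ => show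
              v i * (ξ i * (∑ j, ξ j * v j)) = (ξ i * v i) * (∑ j, ξ j * v j) from by ring,
              ← Finset.sum_mul]
          rw [this]
          exact mul_self_nonneg _
      · ext i
        simp only [Matrix.mulVec, dotProduct, hQapp, Pi.zero_apply, mul_one]
        rw [← Finset.mul_sum, hξ, mul_zero]
    have := h n hn x hx Q hmemO
    rwa [distortedSum_one] at this
end

section
/- Let (X, d_X) be a semi-metric space, 0 < p < ∞ and 1 ≤ C₁ < C₂ < ∞. If X has p-negative type with distortion C₁, then X has strict p-negative type with distortion C₂. -/
open Matrix

theorem statement6 {X : Type*} (d : X → X → ℝ) (hd : IsSemiMetric d)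
    (p C₁ C₂ : ℝ) (hp : 0 < p) (hC₁ : 1 ≤ C₁) (hC : C₁ < C₂)
    (h : NegTypeWith d p C₁) : StrictNegTypeWith d p C₂ := by
  intro n hn x hx Q hQ hQ0
  set S : ℝ := ∑ i, ∑ j, if Q i j < 0 then d (x i) (x j) ^ p * Q i j else 0 with hS
  -- there is a strictly negative off-diagonal entry
  have hdiag : ∀ i, 0 ≤ Q i i := by
    intro i
    have := hQ.1.dotProduct_mulVec_nonneg (Pi.single i 1)
    simpa [Matrix.mulVec, dotProduct, Pi.single_apply] using this
  have hneg : ∃ i j, Q i j < 0 := by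
    by_contra hc
    push_neg at hc
    apply hQ0
    ext i j
    have hrow := congrFun hQ.2 i
    simp only [Matrix.mulVec, dotProduct, mul_one, Pi.zero_apply] at hrow
    have : ∀ k, Q i k = 0 := by
      intro k
      have := Finset.sum_eq_zero_iff_of_nonneg (fun k _ => hc i k) |>.mp hrow
      exact this k (Finset.mem_univ k)
    exact this j
  obtain ⟨i₀, j₀, hij⟩ := hneg
  have hne : i₀ ≠ j₀ := by
    intro he; rw [he] at hij; exact absurd (hdiag j₀) (not_le.mpr hij)
  have hdpos : 0 < d (x i₀) (x j₀) := by
    rcases hd with ⟨-, hnn, hzero⟩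
    rcases lt_or_eq_of_le (hnn (x i₀) (x j₀)) with h1 | h1
    · exact h1
    · exact absurd (hx ((hzero _ _).mp h1.symm)) hne
  have hterm : d (x i₀) (x j₀) ^ p * Q i₀ j₀ < 0 :=
    mul_neg_of_pos_of_neg (Real.rpow_pos_of_pos hdpos p) hij
  have hSneg : S < 0 := by
    rw [hS, ← Finset.sum_product']
    refine lt_of_lt_of_le (Finset.sum_lt_sum (g := fun _ => (0:ℝ)) ?_ ?_) (by simp)
    · rintro ⟨i, j⟩ -
      dsimp only
      split
      · exact mul_nonpos_of_nonneg_of_nonpos (Real.rpow_nonneg (hd.2.1 _ _) p)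
          (le_of_lt (by assumption))
      · exact le_refl 0
    · refine ⟨(i₀, j₀), Finset.mem_product.mpr ⟨Finset.mem_univ _, Finset.mem_univ _⟩, ?_⟩
      dsimp only
      rw [if_pos hij]
      exact hterm
  have hsq : C₁ ^ 2 < C₂ ^ 2 := by nlinarith
  have key : distortedSum d p x Q C₂ = distortedSum d p x Q C₁ + (C₂ ^ 2 - C₁ ^ 2) * S := by
    simp only [distortedSum, hS]; ring
  have h1 : distortedSum d p x Q C₁ ≤ 0 := h n hn x hx Q hQ
  have h2 : (C₂ ^ 2 - C₁ ^ 2) * S < 0 := mul_neg_of_pos_of_neg (by linarith) hSneg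
  linarith [key]
end

section
/- Let (X, d_X) be a semi-metric space, 0 < q < p < ∞ and 1 ≤ C < ∞. If X has p-negative type with distortion C, then X has strict q-negative type with distortion C^{q/p}. -/
open Matrix

namespace S8

open MeasureTheory Real Set
open scoped ENNReal RealInnerProductSpace

noncomputable def ker (s : ℝ) (u : ℝ) : ℝ := (1 - Real.exp (-u)) * u ^ (-s - 1)

lemma continuousOn_ker (s : ℝ) : ContinuousOn (ker s) (Ioi 0) := by
  apply ContinuousOn.mul
  · fun_prop
  · intro u hu
    exact (Real.continuousAt_rpow_const u _ (Or.inl (ne_of_gt hu))).continuousWithinAt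

lemma ker_pos {s u : ℝ} (hu : 0 < u) : 0 < ker s u := by
  apply mul_pos
  · have : Real.exp (-u) < 1 := Real.exp_lt_one_iff.mpr (by linarith)
    linarith
  · exact Real.rpow_pos_of_pos hu _

lemma integrableOn_ker {s : ℝ} (hs0 : 0 < s) (hs1 : s < 1) :
    IntegrableOn (ker s) (Ioi 0) := by
  rw [← Ioc_union_Ioi_eq_Ioi (zero_le_one : (0:ℝ) ≤ 1)]
  apply IntegrableOn.union
  · have hm : AEStronglyMeasurable (ker s) (volume.restrict (Ioc 0 1)) :=
      ((continuousOn_ker s).mono Ioc_subset_Ioi_self).aestronglyMeasurable measurableSet_Ioc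
    refine Integrable.mono' (g := fun u => u ^ (-s)) ?_ hm ?_
    · have h := intervalIntegral.intervalIntegrable_rpow' (a := 0) (b := 1) (r := -s)
        (by linarith)
      have := h.def'
      rwa [uIoc_of_le (zero_le_one : (0:ℝ) ≤ 1)] at this
    · filter_upwards [ae_restrict_mem measurableSet_Ioc] with u hu
      obtain ⟨hu0, hu1⟩ := hu
      have h1 : 1 - Real.exp (-u) ≤ u := by
        have := Real.add_one_le_exp (-u)
        linarith
      have h2 : 0 ≤ 1 - Real.exp (-u) := by
        have : Real.exp (-u) ≤ 1 := Real.exp_le_one_iff.mpr (by linarith)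
        linarith
      have h3 : (0:ℝ) < u ^ (-s - 1) := Real.rpow_pos_of_pos hu0 _
      rw [ker, Real.norm_eq_abs, abs_of_nonneg (mul_nonneg h2 h3.le)]
      calc (1 - Real.exp (-u)) * u ^ (-s - 1) ≤ u * u ^ (-s - 1) :=
            mul_le_mul_of_nonneg_right h1 h3.le
        _ = u ^ (-s) := by
            nth_rewrite 1 [← Real.rpow_one u]
            rw [← Real.rpow_add hu0]
            ring_nf
  · have hm : AEStronglyMeasurable (ker s) (volume.restrict (Ioi 1)) :=
      ((continuousOn_ker s).mono (Ioi_subset_Ioi zero_le_one)).aestronglyMeasurable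
        measurableSet_Ioi
    refine Integrable.mono' (g := fun u => u ^ (-s - 1)) ?_ hm ?_
    · exact integrableOn_Ioi_rpow_of_lt (by linarith) one_pos
    · filter_upwards [ae_restrict_mem measurableSet_Ioi] with u hu
      have hu0 : (0:ℝ) < u := lt_trans one_pos hu
      have h2 : 0 ≤ 1 - Real.exp (-u) := by
        have : Real.exp (-u) ≤ 1 := Real.exp_le_one_iff.mpr (by linarith)
        linarith
      have h1 : 1 - Real.exp (-u) ≤ 1 := by linarith [Real.exp_pos (-u)]
      have h3 : (0:ℝ) < u ^ (-s - 1) := Real.rpow_pos_of_pos hu0 _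
      rw [ker, Real.norm_eq_abs, abs_of_nonneg (mul_nonneg h2 h3.le)]
      nlinarith

noncomputable def Kc (s : ℝ) : ℝ := ∫ u in Ioi (0:ℝ), ker s u

lemma Kc_pos {s : ℝ} (hs0 : 0 < s) (hs1 : s < 1) : 0 < Kc s := by
  rw [Kc, setIntegral_pos_iff_support_of_nonneg_ae ?_ (integrableOn_ker hs0 hs1)]
  · have hsub : Ioi (0:ℝ) ⊆ Function.support (ker s) ∩ Ioi 0 :=
      fun u hu => ⟨(ker_pos hu).ne', hu⟩
    calc (0:ℝ≥0∞) < volume (Ioi (0:ℝ)) := by rw [Real.volume_Ioi]; exact ENNReal.zero_lt_top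
      _ ≤ _ := measure_mono hsub
  · filter_upwards [ae_restrict_mem measurableSet_Ioi] with u hu
    exact (ker_pos hu).le

lemma ker_scaled_eq {s t : ℝ} (ht : 0 < t) : ∀ l ∈ Ioi (0:ℝ),
    (1 - Real.exp (-(t * l))) * l ^ (-s - 1) = t ^ (s+1) * ker s (t * l) := by
  intro l hl
  have hl0 : (0:ℝ) < l := hl
  rw [ker, Real.mul_rpow ht.le hl0.le]
  have : t ^ (s+1) * ((1 - Real.exp (-(t*l))) * (t ^ (-s-1) * l ^ (-s-1)))
      = (t ^ (s+1) * t ^ (-s-1)) * ((1 - Real.exp (-(t*l))) * l ^ (-s-1)) := by ring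
  rw [this, ← Real.rpow_add ht]
  norm_num

lemma integrableOn_ker_scaled {s : ℝ} (hs0 : 0 < s) (hs1 : s < 1) {t : ℝ} (ht : 0 < t) :
    IntegrableOn (fun l : ℝ => (1 - Real.exp (-(t * l))) * l ^ (-s - 1)) (Ioi 0) := by
  have h1 : IntegrableOn (fun l : ℝ => ker s (t * l)) (Ioi 0) := by
    have := (integrableOn_Ioi_comp_mul_left_iff (ker s) 0 ht).mpr
      (by simpa [mul_zero] using integrableOn_ker hs0 hs1)
    simpa [mul_zero] using this
  have h2 : IntegrableOn (fun l : ℝ => t ^ (s+1) * ker s (t * l)) (Ioi 0) :=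
    h1.const_mul _
  exact h2.congr_fun (fun l hl => (ker_scaled_eq ht l hl).symm) measurableSet_Ioi

lemma integral_ker_scaled (s : ℝ) {t : ℝ} (ht : 0 < t) :
    ∫ l in Ioi (0:ℝ), (1 - Real.exp (-(t * l))) * l ^ (-s - 1) = t ^ s * Kc s := by
  rw [setIntegral_congr_fun measurableSet_Ioi (ker_scaled_eq ht), integral_const_mul,
    MeasureTheory.integral_comp_mul_left_Ioi (ker s) 0 ht]
  rw [mul_zero, smul_eq_mul, ← mul_assoc]
  have : t ^ (s+1) * t⁻¹ = t ^ s := by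
    rw [← Real.rpow_neg_one t, ← Real.rpow_add ht]
    norm_num
  rw [this, Kc]

variable {V : Type*} [NormedAddCommGroup V] [InnerProductSpace ℝ V]

noncomputable def expChar (a : V) : Multiplicative V →* ℝ where
  toFun := fun w => Real.exp ⟪a, Multiplicative.toAdd w⟫
  map_one' := by simp
  map_mul' := fun w₁ w₂ => by
    simp [toAdd_mul, inner_add_right, Real.exp_add]

lemma expChar_injective : Function.Injective (expChar (V := V)) := by
  intro a b hab
  have h := congrFun (congrArg (fun f : Multiplicative V →* ℝ => (f : Multiplicative V → ℝ)) hab)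
    (Multiplicative.ofAdd (a - b))
  simp only [expChar, MonoidHom.coe_mk, OneHom.coe_mk, toAdd_ofAdd] at h
  have h2 : ⟪a, a - b⟫ = ⟪b, a - b⟫ := Real.exp_injective h
  have h3 : ⟪a - b, a - b⟫ = 0 := by
    rw [inner_sub_left]
    linarith
  have := inner_self_eq_zero (𝕜 := ℝ) (x := a - b) |>.mp h3
  exact sub_eq_zero.mp this

lemma sum_exp_inner_eq_zero {n : ℕ} {a : Fin n → V} (ha : Function.Injective a)
    {c : Fin n → ℝ} (h : ∀ w : V, ∑ j, c j * Real.exp ⟪a j, w⟫ = 0) : c = 0 := by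
  have li : LinearIndependent ℝ (fun j : Fin n => ((expChar (a j) : Multiplicative V → ℝ))) :=
    (linearIndependent_monoidHom (Multiplicative V) ℝ).comp (fun j => expChar (a j))
      (fun j k hjk => ha (expChar_injective hjk))
  have hz : ∑ j, c j • (fun w : Multiplicative V => Real.exp ⟪a j, Multiplicative.toAdd w⟫) = 0 := by
    funext w
    have := h (Multiplicative.toAdd w)
    simpa [Finset.sum_apply] using this
  have h4 := Fintype.linearIndependent_iff.mp li c (by exact hz)
  funext j; exact h4 j

variable [FiniteDimensional ℝ V] [MeasurableSpace V] [BorelSpace V]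

lemma integrable_gauss {b : ℝ} (hb : 0 < b) :
    Integrable (fun w : V => Real.exp (-b * ‖w‖^2)) := by
  have h := GaussianFourier.integrable_cexp_neg_mul_sq_norm_add (V := V)
    (b := (b:ℂ)) (by simpa using hb) 0 0
  have h2 := h.norm
  refine h2.congr (Filter.Eventually.of_forall fun w => ?_)
  show ‖Complex.exp (-(b:ℂ) * (‖w‖:ℂ)^2 + 0 * ((inner ℝ (0:V) w : ℝ):ℂ))‖ = _
  rw [show (-(b:ℂ) * (‖w‖:ℂ)^2 + 0 * ((inner ℝ (0:V) w : ℝ):ℂ)) = ((-b*‖w‖^2 : ℝ):ℂ) from by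
    push_cast; ring]
  rw [Complex.norm_exp, Complex.ofReal_re]

lemma integral_gauss_pos {b : ℝ} (hb : 0 < b) :
    0 < ∫ w : V, Real.exp (-b * ‖w‖^2) := by
  rw [GaussianFourier.integral_rexp_neg_mul_sq_norm hb]
  positivity

lemma gauss_conv (b : ℝ) (hb : 0 < b) (a c : V) :
    ∫ w : V, Real.exp (-(2*b) * ‖w - a‖^2) * Real.exp (-(2*b) * ‖w - c‖^2)
      = Real.exp (-(b * ‖a - c‖^2)) * ∫ w : V, Real.exp (-(4*b) * ‖w‖^2) := by
  have key : ∀ w : V, Real.exp (-(2*b) * ‖w - a‖^2) * Real.exp (-(2*b) * ‖w - c‖^2)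
      = Real.exp (-(b * ‖a - c‖^2)) * Real.exp (-(4*b) * ‖w - (2⁻¹ : ℝ) • (a + c)‖^2) := by
    intro w
    rw [← Real.exp_add, ← Real.exp_add]
    congr 1
    have hpar : ‖(w - a) + (w - c)‖^2 + ‖(w - a) - (w - c)‖^2
        = 2 * (‖w - a‖^2 + ‖w - c‖^2) := by
      have := parallelogram_law_with_norm ℝ (w - a) (w - c)
      linarith
    have h1 : (w - a) + (w - c) = (2:ℝ) • (w - (2⁻¹ : ℝ) • (a + c)) := by
      module
    have h2 : (w - a) - (w - c) = c - a := by abel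
    rw [h1, h2] at hpar
    rw [norm_smul] at hpar
    simp only [Real.norm_ofNat, mul_pow] at hpar
    have hac : ‖c - a‖ = ‖a - c‖ := by rw [← neg_sub, norm_neg]
    rw [hac] at hpar
    nlinarith [hpar]
  rw [MeasureTheory.integral_congr_ae (Filter.Eventually.of_forall key), integral_const_mul]
  congr 1
  calc ∫ w : V, Real.exp (-(4*b) * ‖w - (2⁻¹ : ℝ) • (a + c)‖^2)
      = ∫ w : V, Real.exp (-(4*b) * ‖w + -((2⁻¹ : ℝ) • (a + c))‖^2) := by
        simp only [sub_eq_add_neg]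
    _ = ∫ w : V, Real.exp (-(4*b) * ‖w‖^2) :=
        MeasureTheory.integral_add_right_eq_self
          (fun w : V => Real.exp (-(4*b) * ‖w‖^2)) (-((2⁻¹ : ℝ) • (a + c)))

lemma gaussian_matrix_pos {n : ℕ} {v : Fin n → V} (hv : Function.Injective v)
    {Q : Matrix (Fin n) (Fin n) ℝ} (hQ : Q.PosSemidef) (hQ0 : Q ≠ 0) {l : ℝ} (hl : 0 < l) :
    0 < ∑ i, ∑ j, Q i j * Real.exp (-(‖v i - v j‖^2 * l)) := by
  set I : ℝ := ∫ w : V, Real.exp (-(4*l) * ‖w‖^2) with hI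
  have hIpos : 0 < I := integral_gauss_pos (by linarith)
  set φ : V → Fin n → ℝ := fun w j => Real.exp (-(2*l) * ‖w - v j‖^2) with hφ
  have hφint : ∀ j, Integrable (fun w : V => φ w j) := by
    intro j
    have := (integrable_gauss (V := V) (b := 2*l) (by linarith)).comp_sub_right (v j)
    simpa [hφ] using this
  have hφcont : ∀ j, Continuous (fun w : V => φ w j) := by
    intro j; fun_prop
  have hφpos : ∀ w j, 0 < φ w j := fun w j => Real.exp_pos _
  have hij_int : ∀ i j, Integrable (fun w : V => φ w i * φ w j) := by
    intro i j
    refine (hφint i).mono' ((hφcont i).mul (hφcont j)).aestronglyMeasurable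
      (Filter.Eventually.of_forall fun w => ?_)
    rw [Real.norm_eq_abs, abs_of_nonneg (mul_nonneg (hφpos w i).le (hφpos w j).le)]
    have h1 : φ w j ≤ 1 := Real.exp_le_one_iff.mpr (by nlinarith [sq_nonneg ‖w - v j‖])
    nlinarith [hφpos w i, hφpos w j]
  have hFint : Integrable (fun w : V => ∑ i, ∑ j, Q i j * (φ w i * φ w j)) := by
    apply MeasureTheory.integrable_finset_sum
    intro i _
    apply MeasureTheory.integrable_finset_sum
    intro j _
    exact (hij_int i j).const_mul _
  -- key identity
  have key : (∑ i, ∑ j, Q i j * Real.exp (-(‖v i - v j‖^2 * l))) * I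
      = ∫ w : V, ∑ i, ∑ j, Q i j * (φ w i * φ w j) := by
    rw [MeasureTheory.integral_finset_sum _ (fun i _ => integrable_finset_sum _
      (fun j _ => (hij_int i j).const_mul (Q i j)))]
    rw [Finset.sum_mul]
    congr 1
    funext i
    rw [MeasureTheory.integral_finset_sum _ (fun j _ => (hij_int i j).const_mul (Q i j)),
      Finset.sum_mul]
    congr 1
    funext j
    rw [MeasureTheory.integral_const_mul]
    have hc := gauss_conv l hl (v i) (v j)
    rw [mul_comm l (‖v i - v j‖^2)] at hc
    have heq : (∫ w : V, φ w i * φ w j) = Real.exp (-(‖v i - v j‖^2 * l)) * I := by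
      simp only [hφ]
      rw [hc, hI]
    rw [heq]
    ring
  -- nonnegativity of the integrand
  have hFnn : ∀ w, 0 ≤ ∑ i, ∑ j, Q i j * (φ w i * φ w j) := by
    intro w
    have h := hQ.dotProduct_mulVec_nonneg (φ w)
    have hdot : dotProduct (star (φ w)) (Q *ᵥ (φ w)) = ∑ i, ∑ j, Q i j * (φ w i * φ w j) := by
      simp only [dotProduct, Matrix.mulVec, star_trivial, dotProduct]
      rw [Finset.sum_congr rfl (fun i _ => Finset.mul_sum _ _ _)]
      congr 1; funext i; congr 1; funext j; ring
    rw [hdot] at h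
    exact h
  by_contra hcon
  push_neg at hcon
  have hS : (∑ i, ∑ j, Q i j * Real.exp (-(‖v i - v j‖^2 * l))) = 0 := by
    have h1 : 0 ≤ ∫ w : V, ∑ i, ∑ j, Q i j * (φ w i * φ w j) :=
      integral_nonneg hFnn
    nlinarith [key, hIpos]
  have hint0 : ∫ w : V, ∑ i, ∑ j, Q i j * (φ w i * φ w j) = 0 := by
    rw [← key, hS, zero_mul]
  have hae := (MeasureTheory.integral_eq_zero_iff_of_nonneg
    (fun w => hFnn w) hFint).mp hint0
  have hFcont : Continuous (fun w : V => ∑ i, ∑ j, Q i j * (φ w i * φ w j)) := by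
    fun_prop
  have hzero : ∀ w : V, ∑ i, ∑ j, Q i j * (φ w i * φ w j) = 0 := by
    have := (hFcont.ae_eq_iff_eq (volume) continuous_const).mp hae
    intro w; exact congrFun this w
  -- conclude Q = 0
  apply hQ0
  ext i j
  -- from quadratic form zero at every φ w, get Q *ᵥ φ w = 0
  have hmv : ∀ w : V, Q *ᵥ (φ w) = 0 := by
    intro w
    apply (hQ.dotProduct_mulVec_zero_iff (φ w)).mp
    have hdot : dotProduct (star (φ w)) (Q *ᵥ (φ w)) = ∑ i, ∑ j, Q i j * (φ w i * φ w j) := by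
      simp only [dotProduct, Matrix.mulVec, star_trivial, dotProduct]
      rw [Finset.sum_congr rfl (fun i _ => Finset.mul_sum _ _ _)]
      congr 1; funext i; congr 1; funext j; ring
    rw [hdot, hzero w]
  -- rows are zero by linear independence of Gaussians
  have hrow : ∀ w : V, ∑ k, Q i k * φ w k = 0 := by
    intro w
    have := congrFun (hmv w) i
    simpa [Matrix.mulVec, dotProduct] using this
  have hexp : ∀ w : V, ∑ k, (Q i k * Real.exp (-(2*l) * ‖v k‖^2)) * Real.exp ⟪(4*l) • v k, w⟫
      = 0 := by
    intro w
    have h := hrow w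
    have hfactor : ∀ k, Q i k * φ w k
        = ((Q i k * Real.exp (-(2*l) * ‖v k‖^2)) * Real.exp ⟪(4*l) • v k, w⟫)
          * Real.exp (-(2*l) * ‖w‖^2) := by
      intro k
      simp only [hφ]
      rw [mul_assoc, mul_assoc, ← Real.exp_add, ← Real.exp_add]
      congr 2
      rw [real_inner_smul_left, norm_sub_sq_real, real_inner_comm (v k) w]
      ring
    have h2 : (∑ k, (Q i k * Real.exp (-(2*l) * ‖v k‖^2)) * Real.exp ⟪(4*l) • v k, w⟫)
        * Real.exp (-(2*l) * ‖w‖^2) = 0 := by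
      rw [Finset.sum_mul] at *
      rw [← h]
      congr 1; funext k
      exact (hfactor k).symm
    have hne : Real.exp (-(2*l) * ‖w‖^2) ≠ 0 := (Real.exp_pos _).ne'
    exact (mul_eq_zero.mp h2).resolve_right hne
  have ha : Function.Injective (fun k => (4*l : ℝ) • v k) := by
    intro k k' hkk'
    apply hv
    have h4l : (4*l : ℝ) ≠ 0 := by positivity
    exact smul_right_injective V h4l hkk'
  have := sum_exp_inner_eq_zero ha hexp
  have hcj := congrFun this j
  have hne : Real.exp (-(2*l) * ‖v j‖^2) ≠ 0 := (Real.exp_pos _).ne'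
  have : Q i j * Real.exp (-(2*l) * ‖v j‖^2) = 0 := hcj
  simpa [Matrix.zero_apply] using (mul_eq_zero.mp this).resolve_right hne


lemma main_neg {n : ℕ} {v : Fin n → V} (hv : Function.Injective v)
    {Q : Matrix (Fin n) (Fin n) ℝ} (hQ : MemO Q) (hQ0 : Q ≠ 0)
    {s : ℝ} (hs0 : 0 < s) (hs1 : s < 1) :
    ∑ i, ∑ j, ((‖v i - v j‖ ^ 2 : ℝ) ^ s) * Q i j < 0 := by
  set T : Fin n → Fin n → ℝ := fun i j => ‖v i - v j‖ ^ 2 with hT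
  have hTnn : ∀ i j, 0 ≤ T i j := fun i j => sq_nonneg _
  have hTpos : ∀ i j, i ≠ j → 0 < T i j := by
    intro i j hij
    have : v i - v j ≠ 0 := sub_ne_zero.mpr (fun hc => hij (hv hc))
    have := norm_pos_iff.mpr this
    positivity
  set f : Fin n → Fin n → ℝ → ℝ :=
    fun i j l => Q i j * ((1 - Real.exp (-(T i j * l))) * l ^ (-s - 1)) with hf
  have hfint : ∀ i j, IntegrableOn (f i j) (Ioi 0) := by
    intro i j
    rcases eq_or_ne i j with rfl | hij
    · have hz : ∀ l ∈ Ioi (0:ℝ), f i i l = 0 := by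
        intro l _
        simp [hf, hT, sub_self, norm_zero]
      exact (integrableOn_zero).congr_fun (fun l hl => (hz l hl).symm) measurableSet_Ioi
    · exact (integrableOn_ker_scaled hs0 hs1 (hTpos i j hij)).const_mul _
  have hfval : ∀ i j, ∫ l in Ioi (0:ℝ), f i j l = Kc s * ((T i j) ^ s * Q i j) := by
    intro i j
    rcases eq_or_ne i j with rfl | hij
    · have hz : ∀ l ∈ Ioi (0:ℝ), f i i l = 0 := by
        intro l _
        simp [hf, hT, sub_self, norm_zero]
      rw [setIntegral_congr_fun measurableSet_Ioi hz]
      simp [hT, sub_self, norm_zero, Real.zero_rpow hs0.ne']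
    · rw [hf]
      simp only
      rw [MeasureTheory.integral_const_mul, integral_ker_scaled s (hTpos i j hij)]
      ring
  -- the total integrand
  set g : ℝ → ℝ := fun l => ∑ i, ∑ j, f i j l with hg
  have hgint : IntegrableOn g (Ioi 0) := by
    apply MeasureTheory.integrable_finset_sum
    intro i _
    exact MeasureTheory.integrable_finset_sum _ (fun j _ => hfint i j)
  have hgval : ∫ l in Ioi (0:ℝ), g l = Kc s * ∑ i, ∑ j, (T i j) ^ s * Q i j := by
    rw [hg]
    rw [MeasureTheory.integral_finset_sum _ (fun i _ =>
      MeasureTheory.integrable_finset_sum _ (fun j _ => hfint i j))]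
    rw [Finset.mul_sum]
    congr 1
    funext i
    rw [MeasureTheory.integral_finset_sum _ (fun j _ => hfint i j), Finset.mul_sum]
    congr 1
    funext j
    exact hfval i j
  -- pointwise negativity of g
  have hrow : ∀ i, ∑ j, Q i j = 0 := by
    intro i
    have := congrFun hQ.2 i
    simpa [Matrix.mulVec, dotProduct] using this
  have hgneg : ∀ l ∈ Ioi (0:ℝ), g l = -((∑ i, ∑ j, Q i j * Real.exp (-(T i j * l)))
      * l ^ (-s - 1)) := by
    intro l hl
    have e1 : g l = (∑ i, ∑ j, Q i j) * l ^ (-s-1)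
        - (∑ i, ∑ j, Q i j * Real.exp (-(T i j * l))) * l ^ (-s-1) := by
      rw [hg, hf]
      simp only [Finset.sum_mul, ← Finset.sum_sub_distrib]
      apply Finset.sum_congr rfl; intro i _
      apply Finset.sum_congr rfl; intro j _
      ring
    have e2 : ∑ i, ∑ j, Q i j = (0:ℝ) := by simp [hrow]
    rw [e1, e2]; ring
  have hgpt : ∀ l ∈ Ioi (0:ℝ), 0 < -g l := by
    intro l hl
    rw [hgneg l hl, neg_neg]
    have h1 := gaussian_matrix_pos hv hQ.1 hQ0 (show (0:ℝ) < l from hl)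
    have h2 : (0:ℝ) < l ^ (-s-1) := Real.rpow_pos_of_pos hl _
    exact mul_pos h1 h2
  have hgi2 : IntegrableOn (fun l => -g l) (Ioi 0) := hgint.neg
  have hpos : 0 < ∫ l in Ioi (0:ℝ), -g l := by
    rw [setIntegral_pos_iff_support_of_nonneg_ae ?_ hgi2]
    · have hsub : Ioi (0:ℝ) ⊆ Function.support (fun l => -g l) ∩ Ioi 0 :=
        fun l hl => ⟨(hgpt l hl).ne', hl⟩
      calc (0:ℝ≥0∞) < volume (Ioi (0:ℝ)) := by rw [Real.volume_Ioi]; exact ENNReal.zero_lt_top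
        _ ≤ _ := measure_mono hsub
    · filter_upwards [ae_restrict_mem measurableSet_Ioi] with l hl
      exact (hgpt l hl).le
  rw [integral_neg] at hpos
  have hneg : ∫ l in Ioi (0:ℝ), g l < 0 := by linarith
  rw [hgval] at hneg
  have hK := Kc_pos hs0 hs1
  nlinarith

abbrev W (n : ℕ) := (Fin n × Fin n) → ℝ

lemma sum_ite_fst {n : ℕ} (i : Fin n) (c : ℝ) (M : Fin n → Fin n → ℝ) :
    ∑ a, ∑ b, (if a = i then c else 0) * M a b = c * ∑ b, M i b := by
  rw [Finset.sum_eq_single i]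
  · rw [Finset.mul_sum]
    exact Finset.sum_congr rfl fun b _ => by simp
  · intro k _ hk
    exact Finset.sum_eq_zero fun b _ => by simp [hk]
  · intro hc
    exact absurd (Finset.mem_univ i) hc

lemma sum_ite_snd {n : ℕ} (i : Fin n) (c : ℝ) (M : Fin n → Fin n → ℝ) :
    ∑ a, ∑ b, (if b = i then c else 0) * M a b = c * ∑ a, M a i := by
  rw [Finset.mul_sum]
  refine Finset.sum_congr rfl fun a _ => ?_
  rw [Finset.sum_eq_single i]
  · simp
  · intro j _ hj
    simp [hj]
  · intro hc
    exact absurd (Finset.mem_univ i) hc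

lemma dsum_neg {n : ℕ} (M : Fin n → Fin n → ℝ) :
    ∑ a : Fin n, ∑ b : Fin n, -(M a b) = -(∑ a : Fin n, ∑ b : Fin n, M a b) := by
  simp

lemma dsum_congr {n : ℕ} {M M' : Fin n → Fin n → ℝ} (h : ∀ a b, M a b = M' a b) :
    ∑ a : Fin n, ∑ b : Fin n, M a b = ∑ a : Fin n, ∑ b : Fin n, M' a b :=
  Finset.sum_congr rfl fun a _ => Finset.sum_congr rfl fun b _ => h a b

lemma dsum_add {n : ℕ} (M M' : Fin n → Fin n → ℝ) :
    ∑ a : Fin n, ∑ b : Fin n, (M a b + M' a b)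
      = (∑ a : Fin n, ∑ b : Fin n, M a b) + ∑ a : Fin n, ∑ b : Fin n, M' a b := by
  rw [← Finset.sum_add_distrib]
  exact Finset.sum_congr rfl fun a _ => Finset.sum_add_distrib

lemma dsum_mul_const {n : ℕ} (M : Fin n → Fin n → ℝ) (c : ℝ) :
    ∑ a : Fin n, ∑ b : Fin n, M a b * c
      = (∑ a : Fin n, ∑ b : Fin n, M a b) * c := by
  rw [Finset.sum_mul]
  exact Finset.sum_congr rfl fun a _ => (Finset.sum_mul _ _ _).symm

lemma Qsymm {n : ℕ} {Q : Matrix (Fin n) (Fin n) ℝ} (hQ : Q.PosSemidef) :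
    ∀ a b, Q a b = Q b a := by
  intro a b
  have := congrFun (congrFun hQ.1 a) b
  simpa [Matrix.conjTranspose_apply] using this.symm

lemma Qrow {n : ℕ} {Q : Matrix (Fin n) (Fin n) ℝ} (hQ : MemO Q) (i : Fin n) :
    ∑ j, Q i j = 0 := by
  have := congrFun hQ.2 i
  simpa [Matrix.mulVec, dotProduct] using this

lemma Qcol {n : ℕ} {Q : Matrix (Fin n) (Fin n) ℝ} (hQ : MemO Q) (i : Fin n) :
    ∑ j, Q j i = 0 := by
  rw [← Qrow hQ i]
  exact Finset.sum_congr rfl fun j _ => Qsymm hQ.1 j i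

lemma exists_embedding {n : ℕ} (hn : 0 < n) {D : Matrix (Fin n) (Fin n) ℝ}
    (hsym : ∀ i j, D i j = D j i) (hdiag : ∀ i, D i i = 0) (hnn : ∀ i j, 0 ≤ D i j)
    {C : ℝ} (hC : 1 ≤ C)
    (h : ∀ Q : Matrix (Fin n) (Fin n) ℝ, MemO Q →
      (∑ i, ∑ j, (if 0 < Q i j then D i j * Q i j else 0)) +
        C^2 * ∑ i, ∑ j, (if Q i j < 0 then D i j * Q i j else 0) ≤ 0) :
    ∃ v : Fin n → EuclideanSpace ℝ (Fin n),
      ∀ i j, D i j ≤ ‖v i - v j‖^2 ∧ ‖v i - v j‖^2 ≤ C^2 * D i j := by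
  classical
  have hnR : (n:ℝ) ≠ 0 := Nat.cast_ne_zero.mpr hn.ne'
  set NEG : Set (W n) := {H | ∀ Q : Matrix (Fin n) (Fin n) ℝ, MemO Q →
    ∑ i, ∑ j, H (i,j) * Q i j ≤ 0} with hNEGdef
  set Box : Set (W n) := univ.pi (fun p : Fin n × Fin n =>
    Icc (D p.1 p.2) (C^2 * D p.1 p.2)) with hBoxdef
  have hCsq : (1:ℝ) ≤ C^2 := by nlinarith
  have hDle : ∀ i j : Fin n, D i j ≤ C^2 * D i j := fun i j =>
    le_mul_of_one_le_left (hnn _ _) hCsq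
  -- step 1 : Box ∩ NEG nonempty
  have step1 : ∃ H : W n, H ∈ Box ∧ H ∈ NEG := by
    by_contra hcon
    push_neg at hcon
    have hdisj : Disjoint NEG Box := by
      rw [Set.disjoint_right]
      intro H hB hN
      exact hcon H hB hN
    have hNclosed : IsClosed NEG := by
      have he : NEG = ⋂ (Q : Matrix (Fin n) (Fin n) ℝ) (_ : MemO Q),
          {H : W n | ∑ i, ∑ j, H (i,j) * Q i j ≤ 0} := by
        ext H
        simp only [hNEGdef, Set.mem_setOf_eq, Set.mem_iInter]
      rw [he]
      refine isClosed_iInter fun Q => isClosed_iInter fun _ => isClosed_le ?_ continuous_const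
      exact continuous_finset_sum _ fun i _ => continuous_finset_sum _ fun j _ =>
        ((continuous_apply ((i, j) : Fin n × Fin n)).mul continuous_const)
    have hsum_smul : ∀ (c : ℝ) (H : W n) (Q : Matrix (Fin n) (Fin n) ℝ),
        ∑ i, ∑ j, (c • H) (i,j) * Q i j = c * ∑ i, ∑ j, H (i,j) * Q i j := by
      intro c H Q
      simp only [Pi.smul_apply, smul_eq_mul, Finset.mul_sum]
      exact dsum_congr fun a b => by ring
    have hsum_add : ∀ (H1 H2 : W n) (Q : Matrix (Fin n) (Fin n) ℝ),
        ∑ i, ∑ j, (H1 + H2) (i,j) * Q i j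
          = (∑ i, ∑ j, H1 (i,j) * Q i j) + ∑ i, ∑ j, H2 (i,j) * Q i j := by
      intro H1 H2 Q
      rw [← dsum_add]
      exact dsum_congr fun a b => by simp [add_mul]
    have hNconvex : Convex ℝ NEG := by
      intro H1 h1 H2 h2 a b ha hb hab
      intro Q hQ
      rw [hsum_add, hsum_smul, hsum_smul]
      have g1 := h1 Q hQ
      have g2 := h2 Q hQ
      nlinarith
    have hBconvex : Convex ℝ Box := convex_pi (fun p _ => convex_Icc _ _)
    have hBcompact : IsCompact Box := isCompact_univ_pi (fun p => isCompact_Icc)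
    obtain ⟨f, u, vv, hfN, huv, hfB⟩ :=
      geometric_hahn_banach_closed_compact hNconvex hNclosed hBconvex hBcompact hdisj
    have h0NEG : (0 : W n) ∈ NEG := by
      intro Q hQ
      simp
    have hu0 : 0 < u := by
      have := hfN 0 h0NEG
      simpa using this
    have hcone : ∀ H ∈ NEG, f H ≤ 0 := by
      intro H hH
      by_contra hpos
      push_neg at hpos
      have hcnn : (0:ℝ) ≤ (u+1)/(f H) := by positivity
      have hscale : ((u+1)/(f H)) • H ∈ NEG := by
        intro Q hQ
        rw [hsum_smul]
        exact mul_nonpos_of_nonneg_of_nonpos hcnn (hH Q hQ)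
      have hlt := hfN _ hscale
      rw [f.map_smul, smul_eq_mul, div_mul_cancel₀ _ hpos.ne'] at hlt
      linarith
    have hv0 : 0 < vv := lt_trans hu0 huv
    set R : W n := fun p => f (Pi.single p 1) with hRdef
    have hfR : ∀ H : W n, f H = ∑ a, ∑ b, H (a,b) * R (a,b) := by
      intro H
      have hH : H = ∑ p : Fin n × Fin n, (H p) • (Pi.single p (1:ℝ) : W n) := by
        funext q
        rw [Finset.sum_apply]
        simp only [Pi.smul_apply, smul_eq_mul, Pi.single_apply]
        simp [Finset.sum_ite_eq', mul_comm]
      conv_lhs => rw [hH]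
      rw [map_sum, Fintype.sum_prod_type]
      refine Finset.sum_congr rfl fun a _ => Finset.sum_congr rfl fun b _ => ?_
      rw [f.map_smul, smul_eq_mul, hRdef]
    have hquadR : ∀ ξ : Fin n → ℝ, 0 ≤ ∑ a, ∑ b, ξ a * ξ b * R (a,b) := by
      intro ξ
      have hmem : (fun p : Fin n × Fin n => -(ξ p.1 * ξ p.2)) ∈ NEG := by
        intro Q hQ
        have hps := hQ.1.dotProduct_mulVec_nonneg ξ
        have e : dotProduct (star ξ) (Q *ᵥ ξ) = ∑ a, ∑ b, ξ a * Q a b * ξ b := by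
          simp only [dotProduct, Matrix.mulVec, star_trivial, Finset.mul_sum]
          exact dsum_congr fun a b => by ring
        have e2 : ∑ a, ∑ b, (fun p : Fin n × Fin n => -(ξ p.1 * ξ p.2)) (a,b) * Q a b
            = -(∑ a, ∑ b, ξ a * Q a b * ξ b) := by
          rw [← dsum_neg]
          exact dsum_congr fun a b => by ring
        rw [e2, ← e]
        simpa using hps
      have hle := hcone _ hmem
      rw [hfR] at hle
      have e3 : ∑ a, ∑ b, (fun p : Fin n × Fin n => -(ξ p.1 * ξ p.2)) (a,b) * R (a,b)
          = -(∑ a, ∑ b, ξ a * ξ b * R (a,b)) := by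
        rw [← dsum_neg]
        exact dsum_congr fun a b => by ring
      rw [e3] at hle
      linarith
    have hrowR : ∀ i, ∑ b, R (i,b) = 0 := by
      intro i
      have hmemA : ∀ ε : ℝ, (fun p : Fin n × Fin n => if p.1 = i then ε else 0) ∈ NEG := by
        intro ε Q hQ
        have e : ∑ a, ∑ b, (fun p : Fin n × Fin n => if p.1 = i then ε else 0) (a,b) * Q a b
            = ε * ∑ b, Q i b := sum_ite_fst i ε Q
        rw [e, Qrow hQ i, mul_zero]
      have h1 := hcone _ (hmemA 1)
      have h2 := hcone _ (hmemA (-1))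
      rw [hfR] at h1 h2
      rw [sum_ite_fst i 1 (fun a b => R (a,b))] at h1
      rw [sum_ite_fst i (-1) (fun a b => R (a,b))] at h2
      simp only [one_mul, neg_one_mul] at h1 h2
      linarith
    have hcolR : ∀ i, ∑ a, R (a,i) = 0 := by
      intro i
      have hmemA : ∀ ε : ℝ, (fun p : Fin n × Fin n => if p.2 = i then ε else 0) ∈ NEG := by
        intro ε Q hQ
        have e : ∑ a, ∑ b, (fun p : Fin n × Fin n => if p.2 = i then ε else 0) (a,b) * Q a b
            = ε * ∑ a, Q a i := sum_ite_snd i ε Q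
        rw [e, Qcol hQ i, mul_zero]
      have h1 := hcone _ (hmemA 1)
      have h2 := hcone _ (hmemA (-1))
      rw [hfR] at h1 h2
      rw [sum_ite_snd i 1 (fun a b => R (a,b))] at h1
      rw [sum_ite_snd i (-1) (fun a b => R (a,b))] at h2
      simp only [one_mul, neg_one_mul] at h1 h2
      linarith
    -- symmetrized matrix
    set R' : Matrix (Fin n) (Fin n) ℝ := Matrix.of (fun i j => (R (i,j) + R (j,i))/2)
      with hR'def
    have hR'app : ∀ i j, R' i j = (R (i,j) + R (j,i))/2 := fun i j => rfl
    have hR'symm : ∀ i j, R' i j = R' j i := by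
      intro i j
      rw [hR'app, hR'app]
      ring
    have hR'PSD : R'.PosSemidef := by
      refine Matrix.PosSemidef.of_dotProduct_mulVec_nonneg ?_ ?_
      · ext i j
        rw [Matrix.conjTranspose_apply, star_trivial]
        exact (hR'symm i j).symm
      · intro ξ
        have e : dotProduct (star ξ) (R' *ᵥ ξ) = ∑ a, ∑ b, ξ a * ξ b * R (a,b) := by
          have swap : ∑ a, ∑ b, (ξ a * ξ b * R (b,a))/2
              = ∑ a, ∑ b, (ξ a * ξ b * R (a,b))/2 := by
            rw [Finset.sum_comm]
            exact dsum_congr fun a b => by ring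
          calc dotProduct (star ξ) (R' *ᵥ ξ)
              = ∑ a, ∑ b, ((ξ a * ξ b * R (a,b))/2 + (ξ a * ξ b * R (b,a))/2) := by
                simp only [dotProduct, Matrix.mulVec, star_trivial, Finset.mul_sum]
                refine dsum_congr fun a b => ?_
                rw [hR'app]
                ring
            _ = (∑ a, ∑ b, (ξ a * ξ b * R (a,b))/2)
                  + ∑ a, ∑ b, (ξ a * ξ b * R (b,a))/2 := dsum_add _ _
            _ = ∑ a, ∑ b, ξ a * ξ b * R (a,b) := by
                rw [swap, ← dsum_add]
                exact dsum_congr fun a b => by ring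
        rw [e]
        exact hquadR ξ
    have hR'mv : R' *ᵥ (fun _ => (1:ℝ)) = 0 := by
      funext i
      simp only [Matrix.mulVec, dotProduct, mul_one, Pi.zero_apply]
      calc ∑ j, R' i j = ∑ j, (R (i,j) + R (j,i))/2 := rfl
        _ = (∑ j, (R (i,j) + R (j,i)))/2 := by rw [Finset.sum_div]
        _ = ((∑ j, R (i,j)) + ∑ j, R (j,i))/2 := by rw [Finset.sum_add_distrib]
        _ = 0 := by rw [hrowR i, hcolR i]; norm_num
    have hR'MemO : MemO R' := ⟨hR'PSD, hR'mv⟩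
    -- the contradiction
    set Hstar : W n := fun p => if R' p.1 p.2 < 0 then C^2 * D p.1 p.2 else D p.1 p.2
      with hHstardef
    have hHstarBox : Hstar ∈ Box := by
      intro p _
      by_cases hp : R' p.1 p.2 < 0
      · simp only [hHstardef, hp, if_true]
        exact ⟨hDle _ _, le_refl _⟩
      · simp only [hHstardef, hp, if_false]
        exact ⟨le_refl _, hDle _ _⟩
    have hHstar_symm : ∀ a b, Hstar (a,b) = Hstar (b,a) := by
      intro a b
      simp only [hHstardef]
      rw [hR'symm b a, hsym b a]
    have hT1 : f Hstar = ∑ a, ∑ b, Hstar (a,b) * R' a b := by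
      rw [hfR]
      have swap : ∑ a, ∑ b, (Hstar (a,b) * R (b,a))/2
          = ∑ a, ∑ b, (Hstar (a,b) * R (a,b))/2 := by
        rw [Finset.sum_comm]
        exact dsum_congr fun a b => by rw [hHstar_symm a b]
      calc ∑ a, ∑ b, Hstar (a,b) * R (a,b)
          = ∑ a, ∑ b, ((Hstar (a,b) * R (a,b))/2 + (Hstar (a,b) * R (a,b))/2) := by
            exact dsum_congr fun a b => by ring
        _ = (∑ a, ∑ b, (Hstar (a,b) * R (a,b))/2)
              + ∑ a, ∑ b, (Hstar (a,b) * R (a,b))/2 := dsum_add _ _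
        _ = (∑ a, ∑ b, (Hstar (a,b) * R (a,b))/2)
              + ∑ a, ∑ b, (Hstar (a,b) * R (b,a))/2 := by rw [swap]
        _ = ∑ a, ∑ b, Hstar (a,b) * R' a b := by
            rw [← dsum_add]
            refine dsum_congr fun a b => ?_
            rw [hR'app]
            ring
    have hT2 : ∑ a, ∑ b, Hstar (a,b) * R' a b
        = (∑ a, ∑ b, (if 0 < R' a b then D a b * R' a b else 0))
          + C^2 * ∑ a, ∑ b, (if R' a b < 0 then D a b * R' a b else 0) := by
      have e : C^2 * ∑ a, ∑ b, (if R' a b < 0 then D a b * R' a b else 0)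
          = ∑ a, ∑ b, C^2 * (if R' a b < 0 then D a b * R' a b else 0) := by
        rw [Finset.mul_sum]
        exact Finset.sum_congr rfl fun a _ => Finset.mul_sum _ _ _
      rw [e, ← dsum_add]
      refine dsum_congr fun a b => ?_
      rcases lt_trichotomy (R' a b) 0 with hlt | heq | hgt
      · simp only [hHstardef]
        rw [if_pos hlt, if_neg (by linarith : ¬ (0:ℝ) < R' a b), if_pos hlt]
        ring
      · simp [hHstardef, heq]
      · simp only [hHstardef]
        rw [if_neg (not_lt.mpr hgt.le), if_pos hgt, if_neg (not_lt.mpr hgt.le)]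
        ring
    have hcontr := h R' hR'MemO
    have hgtv := hfB Hstar hHstarBox
    rw [hT1, hT2] at hgtv
    linarith
  -- step 2 : use H to build the embedding
  obtain ⟨H, hHBox, hHNEG⟩ := step1
  set Hm : Matrix (Fin n) (Fin n) ℝ := Matrix.of (fun i j => (H (i,j) + H (j,i))/2)
    with hHmdef
  have hHmapp : ∀ i j, Hm i j = (H (i,j) + H (j,i))/2 := fun i j => rfl
  have hHmsymm : ∀ i j, Hm i j = Hm j i := by
    intro i j
    rw [hHmapp, hHmapp]
    ring
  have hbounds : ∀ i j, D i j ≤ Hm i j ∧ Hm i j ≤ C^2 * D i j := by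
    intro i j
    have b1 := hHBox (i,j) (Set.mem_univ _)
    have b2 := hHBox (j,i) (Set.mem_univ _)
    simp only [Set.mem_Icc] at b1 b2
    rw [hHmapp]
    constructor
    · have := b2.1
      rw [hsym j i] at this
      have := b1.1
      nlinarith [b1.1, b2.1, hsym j i]
    · have h2 := b2.2
      rw [hsym j i] at h2
      nlinarith [b1.2]
  have hHmdiag : ∀ i, Hm i i = 0 := by
    intro i
    have := hbounds i i
    rw [hdiag i] at this
    nlinarith [this.1, this.2]
  have hHmNEG : ∀ Q : Matrix (Fin n) (Fin n) ℝ, MemO Q →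
      ∑ i, ∑ j, Hm i j * Q i j ≤ 0 := by
    intro Q hQ
    have swap : ∑ a, ∑ b, (H (b,a) * Q a b)/2 = ∑ a, ∑ b, (H (a,b) * Q a b)/2 := by
      rw [Finset.sum_comm]
      exact dsum_congr fun a b => by rw [Qsymm hQ.1 b a]
    have e : ∑ i, ∑ j, Hm i j * Q i j = ∑ a, ∑ b, H (a,b) * Q a b := by
      calc ∑ a, ∑ b, Hm a b * Q a b
          = ∑ a, ∑ b, ((H (a,b) * Q a b)/2 + (H (b,a) * Q a b)/2) := by
            refine dsum_congr fun a b => ?_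
            rw [hHmapp]
            ring
        _ = (∑ a, ∑ b, (H (a,b) * Q a b)/2) + ∑ a, ∑ b, (H (b,a) * Q a b)/2 := dsum_add _ _
        _ = ∑ a, ∑ b, H (a,b) * Q a b := by
            rw [swap, ← dsum_add]
            exact dsum_congr fun a b => by ring
    rw [e]
    exact hHNEG Q hQ
  -- Schoenberg construction
  set m : Fin n → ℝ := fun i => (∑ j, Hm i j)/n with hmdef
  set mu : ℝ := (∑ i, ∑ j, Hm i j)/(n^2) with hmudef
  have hrowHm : ∀ i, ∑ j, Hm i j = n * m i := by
    intro i
    rw [hmdef]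
    field_simp
  have hcolHm : ∀ j, ∑ i, Hm i j = n * m j := by
    intro j
    rw [← hrowHm j]
    exact Finset.sum_congr rfl fun i _ => hHmsymm i j
  have htot : ∑ i, ∑ j, Hm i j = n^2 * mu := by
    rw [hmudef]
    field_simp
  set G : Matrix (Fin n) (Fin n) ℝ := Matrix.of (fun i j => (m i + m j - mu - Hm i j)/2)
    with hGdef
  have hGapp : ∀ i j, G i j = (m i + m j - mu - Hm i j)/2 := fun i j => rfl
  have dsum4 : ∀ (X Y Z V : Fin n → Fin n → ℝ),
      ∑ a : Fin n, ∑ b : Fin n, (X a b - Y a b - Z a b + V a b)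
      = (∑ a : Fin n, ∑ b : Fin n, X a b) - (∑ a : Fin n, ∑ b : Fin n, Y a b)
        - (∑ a : Fin n, ∑ b : Fin n, Z a b) + (∑ a : Fin n, ∑ b : Fin n, V a b) := by
    intro X Y Z V
    calc ∑ a : Fin n, ∑ b : Fin n, (X a b - Y a b - Z a b + V a b)
        = ∑ a : Fin n, ((∑ b, X a b) - (∑ b, Y a b) - (∑ b, Z a b) + (∑ b, V a b)) :=
          Finset.sum_congr rfl fun a _ => by
            rw [Finset.sum_add_distrib, Finset.sum_sub_distrib, Finset.sum_sub_distrib]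
      _ = _ := by
          rw [Finset.sum_add_distrib, Finset.sum_sub_distrib, Finset.sum_sub_distrib]
  have dsum4' : ∀ (X Y Z V : Fin n → Fin n → ℝ),
      ∑ a : Fin n, ∑ b : Fin n, (X a b + Y a b - Z a b - V a b)
      = (∑ a : Fin n, ∑ b : Fin n, X a b) + (∑ a : Fin n, ∑ b : Fin n, Y a b)
        - (∑ a : Fin n, ∑ b : Fin n, Z a b) - (∑ a : Fin n, ∑ b : Fin n, V a b) := by
    intro X Y Z V
    calc ∑ a : Fin n, ∑ b : Fin n, (X a b + Y a b - Z a b - V a b)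
        = ∑ a : Fin n, ((∑ b, X a b) + (∑ b, Y a b) - (∑ b, Z a b) - (∑ b, V a b)) :=
          Finset.sum_congr rfl fun a _ => by
            rw [Finset.sum_sub_distrib, Finset.sum_sub_distrib, Finset.sum_add_distrib]
      _ = _ := by
          rw [Finset.sum_sub_distrib, Finset.sum_sub_distrib, Finset.sum_add_distrib]
  have hGPSD : G.PosSemidef := by
    refine Matrix.PosSemidef.of_dotProduct_mulVec_nonneg ?_ ?_
    · ext i j
      rw [Matrix.conjTranspose_apply, star_trivial, hGapp, hGapp, hHmsymm j i]
      ring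
    · intro ξ
      set S : ℝ := ∑ i, ξ i with hSdef
      set A : ℝ := ∑ i, m i * ξ i with hAdef
      set S1 : ℝ := ∑ i, ∑ j, Hm i j * (ξ i * ξ j) with hS1def
      have c1 : ∑ a : Fin n, ∑ b : Fin n, m a * (ξ a * ξ b) = A * S := by
        rw [hAdef, hSdef, Finset.sum_mul_sum]
        exact dsum_congr fun a b => by ring
      have c2 : ∑ a : Fin n, ∑ b : Fin n, m b * (ξ a * ξ b) = A * S := by
        rw [Finset.sum_comm, hAdef, hSdef, Finset.sum_mul_sum]
        exact dsum_congr fun a b => by ring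
      have c3 : ∑ a : Fin n, ∑ b : Fin n, mu * (ξ a * ξ b) = mu * (S * S) := by
        have e : S * S = ∑ a : Fin n, ∑ b : Fin n, ξ a * ξ b := by
          rw [hSdef, Finset.sum_mul_sum]
        rw [e, Finset.mul_sum]
        refine Finset.sum_congr rfl fun a _ => ?_
        rw [Finset.mul_sum]
      have hdot2 : 2 * dotProduct (star ξ) (G *ᵥ ξ)
          = (A*S) + (A*S) - mu * (S*S) - S1 := by
        have e : 2 * dotProduct (star ξ) (G *ᵥ ξ)
            = ∑ a, ∑ b, (m a * (ξ a * ξ b) + m b * (ξ a * ξ b)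
                - mu * (ξ a * ξ b) - Hm a b * (ξ a * ξ b)) := by
          simp only [dotProduct, Matrix.mulVec, star_trivial]
          rw [Finset.mul_sum]
          refine Finset.sum_congr rfl fun a _ => ?_
          rw [Finset.mul_sum, Finset.mul_sum]
          refine Finset.sum_congr rfl fun b _ => ?_
          rw [hGapp]
          ring
        rw [e, dsum4', c1, c2, c3, hS1def]
      -- the centered vector
      set c : ℝ := S/n with hcdef
      have hnc : (n:ℝ) * c = S := by
        rw [hcdef]
        field_simp
      set η : Fin n → ℝ := fun i => ξ i - c with hηdef
      have hηsum : ∑ i, η i = 0 := by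
        rw [hηdef]
        rw [Finset.sum_sub_distrib, Finset.sum_const, Finset.card_univ, Fintype.card_fin,
          ← hSdef, nsmul_eq_mul, hnc]
        ring
      set Qeta : Matrix (Fin n) (Fin n) ℝ := Matrix.of (fun i j => η i * η j) with hQetadef
      have hQetaapp : ∀ i j, Qeta i j = η i * η j := fun i j => rfl
      have hQetaMemO : MemO Qeta := by
        refine ⟨Matrix.PosSemidef.of_dotProduct_mulVec_nonneg ?_ ?_, ?_⟩
        · ext i j
          rw [Matrix.conjTranspose_apply, star_trivial, hQetaapp, hQetaapp]
          ring
        · intro x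
          have e : dotProduct (star x) (Qeta *ᵥ x) = (∑ i, η i * x i)^2 := by
            simp only [dotProduct, Matrix.mulVec, star_trivial]
            rw [sq, Finset.sum_mul_sum]
            refine Finset.sum_congr rfl fun a _ => ?_
            rw [Finset.mul_sum]
            exact Finset.sum_congr rfl fun b _ => by rw [hQetaapp]; ring
          rw [e]
          positivity
        · funext i
          simp only [Matrix.mulVec, dotProduct, mul_one, Pi.zero_apply]
          have e : ∑ j, Qeta i j = η i * ∑ j, η j := by
            rw [Finset.mul_sum]
            exact Finset.sum_congr rfl fun j _ => hQetaapp i j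
          rw [e, hηsum, mul_zero]
      have hQetaNEG := hHmNEG Qeta hQetaMemO
      have t1 : ∑ a : Fin n, ∑ b : Fin n, Hm a b * (c * ξ a) = n * c * A := by
        have e1 : ∀ a : Fin n, ∑ b : Fin n, Hm a b * (c * ξ a) = (n * m a) * (c * ξ a) := by
          intro a
          rw [← Finset.sum_mul, hrowHm a]
        rw [Finset.sum_congr rfl (fun a _ => e1 a), hAdef, Finset.mul_sum]
        exact Finset.sum_congr rfl fun a _ => by push_cast; ring
      have t2 : ∑ a : Fin n, ∑ b : Fin n, Hm a b * (c * ξ b) = n * c * A := by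
        rw [Finset.sum_comm]
        have e1 : ∀ b : Fin n, ∑ a : Fin n, Hm a b * (c * ξ b) = (n * m b) * (c * ξ b) := by
          intro b
          rw [← Finset.sum_mul, hcolHm b]
        rw [Finset.sum_congr rfl (fun b _ => e1 b), hAdef, Finset.mul_sum]
        exact Finset.sum_congr rfl fun b _ => by push_cast; ring
      have t3 : ∑ a : Fin n, ∑ b : Fin n, Hm a b * (c * c)
          = (n:ℝ)^2 * mu * (c * c) := by
        rw [dsum_mul_const (fun a b => Hm a b), htot]
      have expand : ∑ a, ∑ b, Hm a b * Qeta a b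
          = S1 - (n*c*A) - (n*c*A) + (n:ℝ)^2*mu*(c*c) := by
        calc ∑ a, ∑ b, Hm a b * Qeta a b
            = ∑ a, ∑ b, (Hm a b * (ξ a * ξ b) - Hm a b * (c * ξ a)
                - Hm a b * (c * ξ b) + Hm a b * (c * c)) := by
              refine dsum_congr fun a b => ?_
              rw [hQetaapp, hηdef]
              ring
          _ = S1 - (n*c*A) - (n*c*A) + (n:ℝ)^2*mu*(c*c) := by
              rw [dsum4, t1, t2, t3, hS1def]
      rw [expand] at hQetaNEG
      have hsq : (n:ℝ)^2 * mu * (c*c) = mu * (S*S) := by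
        have : (n:ℝ)^2 * (c*c) = ((n:ℝ)*c) * ((n:ℝ)*c) := by ring
        calc (n:ℝ)^2 * mu * (c*c) = mu * ((n:ℝ)^2 * (c*c)) := by ring
          _ = mu * (((n:ℝ)*c) * ((n:ℝ)*c)) := by rw [this]
          _ = mu * (S*S) := by rw [hnc]
      rw [hsq] at hQetaNEG
      have hncA : (n:ℝ) * c * A = S * A := by rw [hnc]
      rw [hncA] at hQetaNEG
      -- hQetaNEG : S1 - S*A - S*A + mu*(S*S) ≤ 0
      linarith [hdot2, hQetaNEG]
  -- extract the vectors
  obtain ⟨B, hB⟩ : ∃ B : Matrix (Fin n) (Fin n) ℝ, G = Bᴴ * B := by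
    open scoped MatrixOrder in
    exact CStarAlgebra.nonneg_iff_eq_star_mul_self.mp hGPSD.nonneg
  have hGentry : ∀ i j, G i j = ∑ k, B k i * B k j := by
    intro i j
    rw [hB, Matrix.mul_apply]
    exact Finset.sum_congr rfl fun k _ => by
      rw [Matrix.conjTranspose_apply, star_trivial]
  set v : Fin n → EuclideanSpace ℝ (Fin n) := fun i => WithLp.toLp 2 (fun k => B k i) with hvdef
  have hnormsq : ∀ i j, ‖v i - v j‖^2 = Hm i j := by
    intro i j
    have happ : ∀ k, (v i - v j) k = B k i - B k j := by
      intro k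
      rfl
    have e1 : ‖v i - v j‖^2 = ∑ k, (B k i - B k j)^2 := by
      rw [EuclideanSpace.norm_eq]
      rw [Real.sq_sqrt (Finset.sum_nonneg fun k _ => sq_nonneg _)]
      refine Finset.sum_congr rfl fun k _ => ?_
      rw [happ k, Real.norm_eq_abs, sq_abs]
    have e2 : ∑ k, (B k i - B k j)^2
        = (∑ k, B k i * B k i) + (∑ k, B k j * B k j) - 2*(∑ k, B k i * B k j) := by
      rw [Finset.mul_sum, ← Finset.sum_add_distrib, ← Finset.sum_sub_distrib]
      exact Finset.sum_congr rfl fun k _ => by ring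
    rw [e1, e2, ← hGentry i i, ← hGentry j j, ← hGentry i j]
    rw [hGapp, hGapp, hGapp, hHmdiag i, hHmdiag j]
    ring
  refine ⟨v, fun i j => ?_⟩
  rw [hnormsq i j]
  exact hbounds i j

end S8

theorem statement8 {X : Type*} (d : X → X → ℝ) (hd : IsSemiMetric d)
    (p q C : ℝ) (hq : 0 < q) (hqp : q < p) (hC : 1 ≤ C)
    (h : NegTypeWith d p C) : StrictNegTypeWith d q (C ^ (q / p)) := by
  intro n hn x hx Q hQ hQ0
  obtain ⟨hdsym, hdnn, hdeq⟩ := hd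
  have hp : 0 < p := hq.trans hqp
  set s : ℝ := q / p with hsdef
  have hs0 : 0 < s := div_pos hq hp
  have hs1 : s < 1 := (div_lt_one hp).mpr hqp
  have hC0 : 0 < C := lt_of_lt_of_le one_pos hC
  set D : Matrix (Fin n) (Fin n) ℝ := Matrix.of (fun i j => d (x i) (x j) ^ p) with hDdef
  have hDapp : ∀ i j, D i j = d (x i) (x j) ^ p := fun i j => rfl
  have hDsym : ∀ i j, D i j = D j i := fun i j => by rw [hDapp, hDapp, hdsym]
  have hDdiag : ∀ i, D i i = 0 := fun i => by
    rw [hDapp, (hdeq _ _).mpr rfl, Real.zero_rpow hp.ne']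
  have hDnn : ∀ i j, 0 ≤ D i j := fun i j => Real.rpow_nonneg (hdnn _ _) _
  have hDpos : ∀ i j, i ≠ j → 0 < D i j := by
    intro i j hij
    rw [hDapp]
    apply Real.rpow_pos_of_pos
    rcases lt_or_eq_of_le (hdnn (x i) (x j)) with hlt | heq
    · exact hlt
    · exact absurd (hx ((hdeq _ _).mp heq.symm)) hij
  obtain ⟨v, hv⟩ := S8.exists_embedding (by omega : 0 < n) hDsym hDdiag hDnn hC
    (fun Q' hQ' => by
      have := h n hn x hx Q' hQ'
      simpa only [distortedSum, hDdef, Matrix.of_apply] using this)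
  have hvinj : Function.Injective v := by
    intro i j hij
    by_contra hne
    have h1 := (hv i j).1
    rw [hij, sub_self, norm_zero] at h1
    have h2 := hDpos i j hne
    simp only [ne_eq, OfNat.ofNat_ne_zero, not_false_eq_true, zero_pow] at h1
    linarith
  have hmain := S8.main_neg hvinj hQ hQ0 hs0 hs1
  set C' : ℝ := C ^ s with hC'def
  have hC'sq : C'^2 = (C^2) ^ s := by
    rw [hC'def, pow_two, pow_two, Real.mul_rpow hC0.le hC0.le]
  have hdq : ∀ i j, d (x i) (x j) ^ q = D i j ^ s := by
    intro i j
    rw [hDapp, ← Real.rpow_mul (hdnn _ _)]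
    congr 1
    rw [hsdef]
    field_simp
  have hterm : ∀ i j,
      (if 0 < Q i j then d (x i) (x j) ^ q * Q i j else 0)
        + C'^2 * (if Q i j < 0 then d (x i) (x j) ^ q * Q i j else 0)
      ≤ ((‖v i - v j‖^2 : ℝ) ^ s) * Q i j := by
    intro i j
    rcases eq_or_ne i j with rfl | hij
    · have hd0 : d (x i) (x i) = 0 := (hdeq _ _).mpr rfl
      have hq0 : d (x i) (x i) ^ q = 0 := by rw [hd0, Real.zero_rpow hq.ne']
      rw [hq0, sub_self, norm_zero]
      simp [Real.zero_rpow hs0.ne']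
    · have hT1 := (hv i j).1
      have hT2 := (hv i j).2
      have hTnn : (0:ℝ) ≤ ‖v i - v j‖^2 := sq_nonneg _
      rcases lt_trichotomy (Q i j) 0 with hlt | heq0 | hgt
      · rw [if_neg (by linarith), if_pos hlt, hdq i j]
        have hle : ((‖v i - v j‖^2 : ℝ) ^ s) ≤ C'^2 * D i j ^ s := by
          rw [hC'sq, ← Real.mul_rpow (by positivity) (hDnn i j)]
          exact Real.rpow_le_rpow hTnn hT2 hs0.le
        nlinarith [hle, hlt]
      · rw [heq0]
        simp
      · rw [if_pos hgt, if_neg (by linarith), hdq i j]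
        have hle : D i j ^ s ≤ ((‖v i - v j‖^2 : ℝ) ^ s) :=
          Real.rpow_le_rpow (hDnn i j) hT1 hs0.le
        nlinarith [hle, hgt]
  have hsum : distortedSum d q x Q C' ≤ ∑ i, ∑ j, ((‖v i - v j‖^2 : ℝ) ^ s) * Q i j := by
    rw [distortedSum]
    have e : C'^2 * ∑ i, ∑ j, (if Q i j < 0 then d (x i) (x j) ^ q * Q i j else 0)
        = ∑ i, ∑ j, C'^2 * (if Q i j < 0 then d (x i) (x j) ^ q * Q i j else 0) := by
      rw [Finset.mul_sum]
      exact Finset.sum_congr rfl fun i _ => Finset.mul_sum _ _ _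
    rw [e, ← S8.dsum_add]
    exact Finset.sum_le_sum fun i _ => Finset.sum_le_sum fun j _ => hterm i j
  exact lt_of_le_of_lt hsum hmain
end

section
/- Let (X, d_X) be a finite semi-metric space with points x₁,…,xₙ, let 0 ≤ p < ∞ and 1 ≤ C < ∞. Then X has strict p-negative type with distortion C if and only if Δ_X(p,C) > 0, where Δ_X(p,C) = inf over Q ∈ 𝒪ₙ(ℝ) with pos(Q) = 1 of −C² ∑_{qᵢⱼ<0} d_X(xᵢ,xⱼ)^p qᵢⱼ − ∑_{qᵢⱼ>0} d_X(xᵢ,xⱼ)^p qᵢⱼ. -/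
open Matrix

lemma mul_double_sum {n : ℕ} (c : ℝ) (f : Fin n → Fin n → ℝ) :
    c * ∑ i, ∑ j, f i j = ∑ i, ∑ j, c * f i j := by
  rw [Finset.mul_sum]
  exact Finset.sum_congr rfl fun i _ => Finset.mul_sum _ _ _

lemma quad_eq {n : ℕ} (Q : Matrix (Fin n) (Fin n) ℝ) (v : Fin n → ℝ) :
    v ⬝ᵥ Q *ᵥ v = ∑ i, ∑ j, v i * (Q i j * v j) := by
  simp [dotProduct, mulVec, Finset.mul_sum]

lemma psd_quad_nonneg {n : ℕ} {Q : Matrix (Fin n) (Fin n) ℝ} (hQ : Q.PosSemidef)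
    (v : Fin n → ℝ) : 0 ≤ ∑ i, ∑ j, v i * (Q i j * v j) := by
  rw [← quad_eq]
  simpa using hQ.dotProduct_mulVec_nonneg v

lemma psd_of_quad {n : ℕ} {Q : Matrix (Fin n) (Fin n) ℝ}
    (hsymm : ∀ i j, Q j i = Q i j)
    (h : ∀ v : Fin n → ℝ, 0 ≤ ∑ i, ∑ j, v i * (Q i j * v j)) : Q.PosSemidef := by
  refine Matrix.PosSemidef.of_dotProduct_mulVec_nonneg ?_ fun v => ?_
  · ext i j
    rw [Matrix.conjTranspose_apply, star_trivial]
    exact hsymm i j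
  · have : (star v) ⬝ᵥ Q *ᵥ v = ∑ i, ∑ j, v i * (Q i j * v j) := quad_eq Q v
    rw [this]
    exact h v

lemma key_quad' {n : ℕ} (Q : Matrix (Fin n) (Fin n) ℝ) (a b : Fin n) :
    ∑ k, (if k = a then (1:ℝ) else 0) * ∑ l, Q k l * (if l = b then 1 else 0)
      = Q a b := by
  rw [Finset.sum_eq_single_of_mem a (Finset.mem_univ a)]
  · simp [mul_ite, Finset.sum_ite_eq']
  · intro k _ hk
    simp [hk]

lemma key_quad {n : ℕ} (Q : Matrix (Fin n) (Fin n) ℝ) (a b : Fin n) :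
    ∑ k, ∑ l, (if k = a then (1:ℝ) else 0) * (Q k l * (if l = b then 1 else 0))
      = Q a b := by
  rw [← key_quad' Q a b]
  exact Finset.sum_congr rfl fun k _ => by rw [Finset.mul_sum]

lemma single_quad {n : ℕ} (Q : Matrix (Fin n) (Fin n) ℝ) (i j : Fin n) (c : ℝ) :
    ∑ k, ∑ l, ((if k = i then 1 else 0) + c * (if k = j then 1 else 0)) *
      (Q k l * ((if l = i then 1 else 0) + c * (if l = j then 1 else 0))) =
      Q i i + c * Q i j + c * Q j i + c * c * Q j j := by
  have expand : ∀ k l : Fin n,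
      ((if k = i then (1:ℝ) else 0) + c * (if k = j then 1 else 0)) *
        (Q k l * ((if l = i then 1 else 0) + c * (if l = j then 1 else 0))) =
      (if k = i then 1 else 0) * (Q k l * (if l = i then 1 else 0))
      + c * ((if k = i then 1 else 0) * (Q k l * (if l = j then 1 else 0)))
      + c * ((if k = j then 1 else 0) * (Q k l * (if l = i then 1 else 0)))
      + c * c * ((if k = j then 1 else 0) * (Q k l * (if l = j then 1 else 0))) := by
    intro k l; ring
  simp only [expand, Finset.sum_add_distrib, ← Finset.mul_sum]
  rw [key_quad' Q i i, key_quad' Q i j, key_quad' Q j i, key_quad' Q j j]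

lemma psd_diag_nonneg {n : ℕ} {Q : Matrix (Fin n) (Fin n) ℝ} (hQ : Q.PosSemidef)
    (i : Fin n) : 0 ≤ Q i i := by
  have h := psd_quad_nonneg hQ (fun k => if k = i then 1 else 0)
  rwa [key_quad Q i i] at h

lemma psd_entry_abs_le {n : ℕ} {Q : Matrix (Fin n) (Fin n) ℝ} (hQ : Q.PosSemidef)
    (i j : Fin n) : |Q i j| ≤ (Q i i + Q j j) / 2 := by
  have hsym : Q j i = Q i j := by
    have := hQ.1.apply i j; rwa [star_trivial] at this
  have h1 := psd_quad_nonneg hQ (fun k => (if k = i then 1 else 0) + 1 * (if k = j then 1 else 0))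
  have h2 := psd_quad_nonneg hQ (fun k => (if k = i then 1 else 0) + (-1) * (if k = j then 1 else 0))
  rw [single_quad Q i j 1] at h1
  rw [single_quad Q i j (-1)] at h2
  rw [abs_le]
  constructor <;> nlinarith

lemma psd_eq_zero_of_diag {n : ℕ} {Q : Matrix (Fin n) (Fin n) ℝ} (hQ : Q.PosSemidef)
    (h : ∀ i, Q i i = 0) : Q = 0 := by
  ext i j
  have h1 := psd_entry_abs_le hQ i j
  rw [h i, h j] at h1
  simp only [Matrix.zero_apply]
  exact abs_nonpos_iff.mp (by linarith)

lemma max_smul' (c q : ℝ) (hc : 0 ≤ c) : max (c * q) 0 = c * max q 0 := by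
  rcases le_total q 0 with h | h
  · rw [max_eq_right h, max_eq_right (mul_nonpos_iff.2 (Or.inl ⟨hc, h⟩)), mul_zero]
  · rw [max_eq_left h, max_eq_left (mul_nonneg hc h)]

lemma min_smul' (c q : ℝ) (hc : 0 ≤ c) : min (c * q) 0 = c * min q 0 := by
  rcases le_total q 0 with h | h
  · rw [min_eq_left h, min_eq_left (mul_nonpos_iff.2 (Or.inl ⟨hc, h⟩))]
  · rw [min_eq_right h, min_eq_right (mul_nonneg hc h), mul_zero]

lemma ifpos_eq (a t : ℝ) : (if 0 < t then a * t else 0) = a * max t 0 := by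
  rcases lt_or_ge 0 t with h | h
  · rw [if_pos h, max_eq_left h.le]
  · rw [if_neg (not_lt.2 h), max_eq_right h, mul_zero]

lemma ifneg_eq (a t : ℝ) : (if t < 0 then a * t else 0) = a * min t 0 := by
  rcases lt_or_ge t 0 with h | h
  · rw [if_pos h, min_eq_left h.le]
  · rw [if_neg (not_lt.2 h), min_eq_right h, mul_zero]

lemma ifpos_eq' (t : ℝ) : (if 0 < t then t else 0) = max t 0 := by
  have := ifpos_eq 1 t; simpa using this

lemma posSum_eq {n : ℕ} (Q : Matrix (Fin n) (Fin n) ℝ) :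
    posSum Q = ∑ i, ∑ j, max (Q i j) 0 := by
  unfold posSum
  exact Finset.sum_congr rfl fun i _ => Finset.sum_congr rfl fun j _ => ifpos_eq' _

lemma distortedSum_eq {X : Type*} (d : X → X → ℝ) (p : ℝ) {n : ℕ}
    (x : Fin n → X) (Q : Matrix (Fin n) (Fin n) ℝ) (C : ℝ) :
    distortedSum d p x Q C =
      (∑ i, ∑ j, d (x i) (x j) ^ p * max (Q i j) 0) +
        C ^ 2 * ∑ i, ∑ j, d (x i) (x j) ^ p * min (Q i j) 0 := by
  unfold distortedSum
  congr 1
  · exact Finset.sum_congr rfl fun i _ => Finset.sum_congr rfl fun j _ => ifpos_eq _ _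
  · congr 1
    exact Finset.sum_congr rfl fun i _ => Finset.sum_congr rfl fun j _ => ifneg_eq _ _

/-- sum over image of an injective map -/
lemma sum_inj {m n : ℕ} (e : Fin m → Fin n) (he : Function.Injective e)
    (h : Fin n → ℝ) (h0 : ∀ i, (∀ a, e a ≠ i) → h i = 0) :
    ∑ i, h i = ∑ a, h (e a) := by
  rw [← Finset.sum_image (g := e) (s := Finset.univ) (f := h)
    (fun a _ b _ hab => he hab)]
  exact (Finset.sum_subset (Finset.subset_univ _) fun i _ hi =>
    h0 i fun a ha => hi (Finset.mem_image.2 ⟨a, Finset.mem_univ a, ha⟩)).symm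

/-- extension of a matrix along an injection, by zero -/
noncomputable def matExt {m n : ℕ} (e : Fin m → Fin n)
    (Q : Matrix (Fin m) (Fin m) ℝ) : Matrix (Fin n) (Fin n) ℝ :=
  Matrix.of fun i j => ∑ a, ∑ b, if e a = i ∧ e b = j then Q a b else 0

lemma matExt_apply {m n : ℕ} (e : Fin m → Fin n) (he : Function.Injective e)
    (Q : Matrix (Fin m) (Fin m) ℝ) (a b : Fin m) :
    matExt e Q (e a) (e b) = Q a b := by
  unfold matExt
  simp only [Matrix.of_apply]
  rw [Finset.sum_eq_single_of_mem a (Finset.mem_univ a)]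
  · rw [Finset.sum_eq_single_of_mem b (Finset.mem_univ b)]
    · simp
    · intro l _ hl
      exact if_neg fun hcon => hl (he hcon.2)
  · intro k _ hk
    exact Finset.sum_eq_zero fun l _ => if_neg fun hcon => hk (he hcon.1)

lemma matExt_zero_left {m n : ℕ} (e : Fin m → Fin n)
    (Q : Matrix (Fin m) (Fin m) ℝ) {i : Fin n} (hi : ∀ a, e a ≠ i) (j : Fin n) :
    matExt e Q i j = 0 := by
  unfold matExt
  simp only [Matrix.of_apply]
  exact Finset.sum_eq_zero fun a _ => Finset.sum_eq_zero fun b _ =>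
    if_neg (fun h => hi a h.1)

lemma matExt_zero_right {m n : ℕ} (e : Fin m → Fin n)
    (Q : Matrix (Fin m) (Fin m) ℝ) (i : Fin n) {j : Fin n} (hj : ∀ b, e b ≠ j) :
    matExt e Q i j = 0 := by
  unfold matExt
  simp only [Matrix.of_apply]
  exact Finset.sum_eq_zero fun a _ => Finset.sum_eq_zero fun b _ =>
    if_neg (fun h => hj b h.2)

/-- transfer of double sums along the extension -/
lemma sum_matExt {m n : ℕ} (e : Fin m → Fin n) (he : Function.Injective e)
    (Q : Matrix (Fin m) (Fin m) ℝ) (g : Fin n → Fin n → ℝ → ℝ)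
    (hg : ∀ i j, g i j 0 = 0) :
    ∑ i, ∑ j, g i j (matExt e Q i j) = ∑ a, ∑ b, g (e a) (e b) (Q a b) := by
  rw [sum_inj e he (fun i => ∑ j, g i j (matExt e Q i j))
    (fun i hi => Finset.sum_eq_zero fun j _ => by
      rw [matExt_zero_left e Q hi, hg])]
  refine Finset.sum_congr rfl fun a _ => ?_
  rw [sum_inj e he (fun j => g (e a) j (matExt e Q (e a) j))
    (fun j hj => by
      show g (e a) j (matExt e Q (e a) j) = 0
      rw [matExt_zero_right e Q _ hj, hg])]
  exact Finset.sum_congr rfl fun b _ => by rw [matExt_apply e he Q a b]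

lemma matExt_memO {m n : ℕ} (e : Fin m → Fin n) (he : Function.Injective e)
    {Q : Matrix (Fin m) (Fin m) ℝ} (hQ : MemO Q) : MemO (matExt e Q) := by
  obtain ⟨hpsd, hrow⟩ := hQ
  have hsym : ∀ a b, Q b a = Q a b := fun a b => by
    have := hpsd.1.apply a b; rwa [star_trivial] at this
  constructor
  · apply psd_of_quad
    · intro i j
      unfold matExt
      simp only [Matrix.of_apply]
      rw [Finset.sum_comm]
      refine Finset.sum_congr rfl fun a _ => Finset.sum_congr rfl fun b _ => ?_
      exact if_congr and_comm (hsym a b) rfl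
    · intro v
      have h := sum_matExt e he Q (fun i j t => v i * (t * v j))
        (fun i j => by ring)
      rw [h]
      exact psd_quad_nonneg hpsd (fun a => v (e a))
  · funext i
    by_cases hi : ∃ a, e a = i
    · obtain ⟨a, rfl⟩ := hi
      have h0 : (Q *ᵥ fun _ => (1:ℝ)) a = 0 := by rw [hrow]; rfl
      simp only [mulVec, dotProduct, mul_one] at h0 ⊢
      rw [sum_inj e he (fun j => matExt e Q (e a) j)
        (fun j hj => matExt_zero_right e Q _ hj)]
      rw [Finset.sum_congr rfl fun b _ => matExt_apply e he Q a b]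
      simpa using h0
    · push_neg at hi
      simp only [mulVec, dotProduct, mul_one]
      rw [Finset.sum_congr rfl fun j _ => matExt_zero_left e Q hi j]
      simp

lemma posSum_matExt {m n : ℕ} (e : Fin m → Fin n) (he : Function.Injective e)
    (Q : Matrix (Fin m) (Fin m) ℝ) : posSum (matExt e Q) = posSum Q := by
  unfold posSum
  exact sum_matExt e he Q (fun _ _ t => if 0 < t then t else 0) (fun _ _ => by simp)

lemma distortedSum_matExt {m n : ℕ} (d : Fin n → Fin n → ℝ) (p C : ℝ)
    (e : Fin m → Fin n) (he : Function.Injective e)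
    (Q : Matrix (Fin m) (Fin m) ℝ) :
    distortedSum d p id (matExt e Q) C = distortedSum d p e Q C := by
  unfold distortedSum
  congr 1
  · exact sum_matExt e he Q (fun i j t => if 0 < t then d i j ^ p * t else 0)
      (fun i j => by simp)
  · congr 1
    exact sum_matExt e he Q (fun i j t => if t < 0 then d i j ^ p * t else 0)
      (fun i j => by simp)

lemma memO_smul {n : ℕ} {Q : Matrix (Fin n) (Fin n) ℝ} (hQ : MemO Q) {c : ℝ}
    (hc : 0 ≤ c) : MemO (c • Q) := by
  obtain ⟨hpsd, hrow⟩ := hQ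
  constructor
  · apply psd_of_quad
    · intro i j
      simp only [Matrix.smul_apply, smul_eq_mul]
      have h := hpsd.1.apply j i; rw [star_trivial] at h
      rw [h]
    · intro v
      calc (0:ℝ) ≤ c * ∑ i, ∑ j, v i * (Q i j * v j) :=
            mul_nonneg hc (psd_quad_nonneg hpsd v)
        _ = ∑ i, ∑ j, v i * ((c • Q) i j * v j) := by
            rw [mul_double_sum]
            exact Finset.sum_congr rfl fun i _ => Finset.sum_congr rfl fun j _ => by
              simp only [Matrix.smul_apply, smul_eq_mul]; ring
  · rw [smul_mulVec, hrow, smul_zero]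

lemma posSum_smul {n : ℕ} (Q : Matrix (Fin n) (Fin n) ℝ) {c : ℝ} (hc : 0 ≤ c) :
    posSum (c • Q) = c * posSum Q := by
  rw [posSum_eq, posSum_eq, mul_double_sum]
  refine Finset.sum_congr rfl fun i _ => Finset.sum_congr rfl fun j _ => ?_
  simp only [Matrix.smul_apply, smul_eq_mul]
  exact max_smul' c (Q i j) hc

lemma distortedSum_smul {X : Type*} (d : X → X → ℝ) (p : ℝ) {n : ℕ}
    (x : Fin n → X) (Q : Matrix (Fin n) (Fin n) ℝ) (C : ℝ) {c : ℝ} (hc : 0 ≤ c) :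
    distortedSum d p x (c • Q) C = c * distortedSum d p x Q C := by
  rw [distortedSum_eq, distortedSum_eq, mul_add]
  congr 1
  · rw [mul_double_sum]
    refine Finset.sum_congr rfl fun i _ => Finset.sum_congr rfl fun j _ => ?_
    simp only [Matrix.smul_apply, smul_eq_mul]
    rw [max_smul' c (Q i j) hc]
    ring
  · have h : ∑ i, ∑ j, d (x i) (x j) ^ p * min ((c • Q) i j) 0
        = c * ∑ i, ∑ j, d (x i) (x j) ^ p * min (Q i j) 0 := by
      rw [mul_double_sum]
      refine Finset.sum_congr rfl fun i _ => Finset.sum_congr rfl fun j _ => ?_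
      simp only [Matrix.smul_apply, smul_eq_mul]
      rw [min_smul' c (Q i j) hc]
      ring
    rw [h]
    ring

lemma posSum_pos_of_ne_zero {n : ℕ} {Q : Matrix (Fin n) (Fin n) ℝ}
    (hQ : Q.PosSemidef) (h0 : Q ≠ 0) : 0 < posSum Q := by
  have hterm : ∀ i j : Fin n, (0:ℝ) ≤ if 0 < Q i j then Q i j else 0 := by
    intro i j
    by_cases h : 0 < Q i j
    · rw [if_pos h]; linarith
    · rw [if_neg h]
  obtain ⟨i, hi⟩ : ∃ i, 0 < Q i i := by
    by_contra hcon
    push_neg at hcon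
    exact h0 (psd_eq_zero_of_diag hQ fun i => le_antisymm (hcon i) (psd_diag_nonneg hQ i))
  have h1 : Q i i ≤ ∑ j, if 0 < Q i j then Q i j else 0 := by
    calc Q i i = (if 0 < Q i i then Q i i else 0) := by rw [if_pos hi]
    _ ≤ _ := Finset.single_le_sum (fun j _ => hterm i j) (Finset.mem_univ i)
  have h2 : (∑ j, if 0 < Q i j then Q i j else 0) ≤ posSum Q :=
    Finset.single_le_sum (fun k (_ : k ∈ Finset.univ) =>
      Finset.sum_nonneg fun j _ => hterm k j) (Finset.mem_univ i)
  linarith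
lemma cont_entry {n : ℕ} (i j : Fin n) :
    Continuous fun Q : Matrix (Fin n) (Fin n) ℝ => Q i j :=
  (continuous_apply j).comp (continuous_apply i)

lemma cont_distortedSum {n : ℕ} (d : Fin n → Fin n → ℝ) (p C : ℝ) :
    Continuous fun Q : Matrix (Fin n) (Fin n) ℝ => distortedSum d p id Q C := by
  have h : (fun Q : Matrix (Fin n) (Fin n) ℝ => distortedSum d p id Q C) =
      fun Q => (∑ i, ∑ j, d (id i) (id j) ^ p * max (Q i j) 0) +
        C ^ 2 * ∑ i, ∑ j, d (id i) (id j) ^ p * min (Q i j) 0 :=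
    funext fun Q => distortedSum_eq d p id Q C
  rw [h]
  apply Continuous.add
  · exact continuous_finset_sum _ fun i _ => continuous_finset_sum _ fun j _ =>
      continuous_const.mul ((cont_entry i j).max continuous_const)
  · exact continuous_const.mul (continuous_finset_sum _ fun i _ =>
      continuous_finset_sum _ fun j _ =>
        continuous_const.mul ((cont_entry i j).min continuous_const))

lemma cont_posSum {n : ℕ} :
    Continuous fun Q : Matrix (Fin n) (Fin n) ℝ => posSum Q := by
  have h : (fun Q : Matrix (Fin n) (Fin n) ℝ => posSum Q) =
      fun Q => ∑ i, ∑ j, max (Q i j) 0 := funext fun Q => posSum_eq Q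
  rw [h]
  exact continuous_finset_sum _ fun i _ => continuous_finset_sum _ fun j _ =>
    (cont_entry i j).max continuous_const

lemma isClosed_S {n : ℕ} :
    IsClosed {Q : Matrix (Fin n) (Fin n) ℝ | MemO Q ∧ posSum Q = 1} := by
  have hset : {Q : Matrix (Fin n) (Fin n) ℝ | MemO Q ∧ posSum Q = 1} =
      ((⋂ i, ⋂ j, {Q : Matrix (Fin n) (Fin n) ℝ | Q j i = Q i j}) ∩
        ⋂ v : Fin n → ℝ,
          {Q : Matrix (Fin n) (Fin n) ℝ | 0 ≤ ∑ i, ∑ j, v i * (Q i j * v j)}) ∩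
      ({Q : Matrix (Fin n) (Fin n) ℝ | Q *ᵥ (fun _ => (1:ℝ)) = 0} ∩
        {Q : Matrix (Fin n) (Fin n) ℝ | posSum Q = 1}) := by
    ext Q
    simp only [Set.mem_setOf_eq, Set.mem_inter_iff, Set.mem_iInter]
    constructor
    · rintro ⟨⟨hpsd, hrow⟩, hps⟩
      refine ⟨⟨fun i j => ?_, fun v => psd_quad_nonneg hpsd v⟩, hrow, hps⟩
      have := hpsd.1.apply i j; rwa [star_trivial] at this
    · rintro ⟨⟨hsym, hquad⟩, hrow, hps⟩
      exact ⟨⟨psd_of_quad hsym hquad, hrow⟩, hps⟩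
  rw [hset]
  refine IsClosed.inter (IsClosed.inter ?_ ?_) (IsClosed.inter ?_ ?_)
  · exact isClosed_iInter fun i => isClosed_iInter fun j =>
      isClosed_eq (cont_entry j i) (cont_entry i j)
  · refine isClosed_iInter fun v => isClosed_le continuous_const ?_
    exact continuous_finset_sum _ fun i _ => continuous_finset_sum _ fun j _ =>
      continuous_const.mul ((cont_entry i j).mul continuous_const)
  · have : {Q : Matrix (Fin n) (Fin n) ℝ | Q *ᵥ (fun _ => (1:ℝ)) = 0} =
        ⋂ i, {Q : Matrix (Fin n) (Fin n) ℝ | ∑ j, Q i j * 1 = 0} := by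
      ext Q
      simp only [Set.mem_setOf_eq, Set.mem_iInter]
      constructor
      · intro h i
        have := congrFun h i
        simpa [mulVec, dotProduct] using this
      · intro h
        funext i
        simpa [mulVec, dotProduct] using h i
    rw [this]
    exact isClosed_iInter fun i => isClosed_eq
      (continuous_finset_sum _ fun j _ => (cont_entry i j).mul continuous_const)
      continuous_const
  · exact isClosed_eq cont_posSum continuous_const

lemma diag_le_posSum {n : ℕ} (Q : Matrix (Fin n) (Fin n) ℝ) (k : Fin n) :
    Q k k ≤ posSum Q := by
  rw [posSum_eq]
  have h1 : Q k k ≤ max (Q k k) 0 := le_max_left _ _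
  have h2 : max (Q k k) 0 ≤ ∑ j, max (Q k j) 0 :=
    Finset.single_le_sum (f := fun j => max (Q k j) 0)
      (fun j _ => le_max_right _ _) (Finset.mem_univ k)
  have h3 : (∑ j, max (Q k j) 0) ≤ ∑ i, ∑ j, max (Q i j) 0 :=
    Finset.single_le_sum (f := fun i => ∑ j, max (Q i j) 0)
      (fun i _ => Finset.sum_nonneg fun j _ => le_max_right _ _) (Finset.mem_univ k)
  linarith

lemma isCompact_S {n : ℕ} :
    IsCompact {Q : Matrix (Fin n) (Fin n) ℝ | MemO Q ∧ posSum Q = 1} := by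
  have hK : IsCompact {Q : Matrix (Fin n) (Fin n) ℝ | ∀ i j, Q i j ∈ Set.Icc (-1:ℝ) 1} := by
    have he : {Q : Matrix (Fin n) (Fin n) ℝ | ∀ i j, Q i j ∈ Set.Icc (-1:ℝ) 1} =
        Set.univ.pi (fun _ : Fin n => Set.univ.pi fun _ : Fin n => Set.Icc (-1:ℝ) 1) := by
      ext Q
      constructor
      · intro h i _
        intro j _
        exact h i j
      · intro h i j
        exact h i (Set.mem_univ i) j (Set.mem_univ j)
    rw [he]
    exact isCompact_univ_pi fun i => isCompact_univ_pi fun j => isCompact_Icc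
  refine IsCompact.of_isClosed_subset hK isClosed_S ?_
  rintro Q ⟨⟨hpsd, _⟩, hps⟩ i j
  have hd : ∀ k, Q k k ≤ 1 := fun k => by
    have := diag_le_posSum Q k; rw [hps] at this; exact this
  have habs := psd_entry_abs_le hpsd i j
  have : |Q i j| ≤ 1 := le_trans habs (by have := hd i; have := hd j; linarith)
  rw [abs_le] at this
  exact ⟨this.1, this.2⟩

lemma exists_mem_S {n : ℕ} (hn : 2 ≤ n) :
    ∃ Q : Matrix (Fin n) (Fin n) ℝ, MemO Q ∧ posSum Q = 1 := by
  set i0 : Fin n := ⟨0, by omega⟩ with hi0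
  set i1 : Fin n := ⟨1, by omega⟩ with hi1
  have hne : i0 ≠ i1 := by simp [hi0, hi1, Fin.ext_iff]
  set v : Fin n → ℝ := fun i => (if i = i0 then 1 else 0) - (if i = i1 then 1 else 0) with hv
  have hsum : ∑ i, v i = 0 := by
    simp [hv, Finset.sum_sub_distrib, Finset.sum_ite_eq']
  have habs : ∑ i, |v i| = 2 := by
    have hpt : ∀ i, |v i| = (if i = i0 then 1 else 0) + (if i = i1 then 1 else 0) := by
      intro i
      rcases eq_or_ne i i0 with rfl | h0
      · simp [hv, hne]
      · rcases eq_or_ne i i1 with rfl | h1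
        · simp [hv, h0]
        · simp [hv, h0, h1]
    rw [Finset.sum_congr rfl fun i _ => hpt i]
    simp [Finset.sum_add_distrib, Finset.sum_ite_eq']
    norm_num
  refine ⟨Matrix.of fun i j => v i * v j / 2, ⟨?_, ?_⟩, ?_⟩
  · apply psd_of_quad
    · intro i j; simp only [Matrix.of_apply]; ring
    · intro w
      have hq : ∑ i, ∑ j, w i * ((Matrix.of fun i j => v i * v j / 2) i j * w j) =
          (∑ j, v j * w j) ^ 2 / 2 := by
        have h1 : ∀ i, ∑ j, w i * ((v i * v j / 2) * w j)
            = (w i * v i / 2) * ∑ j, v j * w j := by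
          intro i
          rw [Finset.mul_sum]
          exact Finset.sum_congr rfl fun j _ => by ring
        calc ∑ i, ∑ j, w i * ((Matrix.of fun i j => v i * v j / 2) i j * w j)
            = ∑ i, (w i * v i / 2) * ∑ j, v j * w j := by
              refine Finset.sum_congr rfl fun i _ => ?_
              simp only [Matrix.of_apply]
              exact h1 i
          _ = (∑ i, w i * v i / 2) * ∑ j, v j * w j := by rw [Finset.sum_mul]
          _ = ((∑ j, v j * w j) / 2) * ∑ j, v j * w j := by
              congr 1
              rw [← Finset.sum_div]
              congr 1
              exact Finset.sum_congr rfl fun i _ => by ring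
          _ = (∑ j, v j * w j) ^ 2 / 2 := by ring
      rw [hq]
      positivity
  · funext i
    simp only [mulVec, dotProduct, Matrix.of_apply, mul_one]
    have h : ∑ j, v i * v j / 2 = v i / 2 * ∑ j, v j := by
      rw [Finset.mul_sum]
      exact Finset.sum_congr rfl fun j _ => by ring
    rw [h, hsum, mul_zero]
    rfl
  · rw [posSum_eq]
    have hmax : ∀ i j : Fin n, max ((Matrix.of fun i j => v i * v j / 2) i j) 0
        = (|v i| * |v j| + v i * v j) / 4 := by
      intro i j
      simp only [Matrix.of_apply]
      have habs2 : |v i * v j / 2| = |v i| * |v j| / 2 := by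
        rw [abs_div, abs_mul]
        norm_num
      rcases le_total (v i * v j / 2) 0 with h | h
      · rw [max_eq_right h]
        have : |v i * v j / 2| = -(v i * v j / 2) := abs_of_nonpos h
        rw [this] at habs2
        linarith
      · rw [max_eq_left h]
        have : |v i * v j / 2| = v i * v j / 2 := abs_of_nonneg h
        rw [this] at habs2
        linarith
    rw [Finset.sum_congr rfl fun i _ => Finset.sum_congr rfl fun j _ => hmax i j]
    have hrow : ∀ i : Fin n, ∑ j, (|v i| * |v j| + v i * v j) / 4
        = (|v i| * 2 + v i * 0) / 4 := by
      intro i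
      rw [← Finset.sum_div]
      congr 1
      rw [Finset.sum_add_distrib, ← Finset.mul_sum, ← Finset.mul_sum, habs, hsum]
    rw [Finset.sum_congr rfl fun i _ => hrow i]
    have : ∀ i : Fin n, (|v i| * 2 + v i * 0) / 4 = |v i| / 2 := fun i => by ring
    rw [Finset.sum_congr rfl fun i _ => this i, ← Finset.sum_div, habs]
    norm_num

theorem statement9 {n : ℕ} (hn : 2 ≤ n) (d : Fin n → Fin n → ℝ)
    (hd : IsSemiMetric d) (p C : ℝ) (hp : 0 ≤ p) (hC : 1 ≤ C) :
    StrictNegTypeWith d p C ↔ 0 < Delta d p C := by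
  constructor
  · intro hS
    obtain ⟨Qe, hQe⟩ := exists_mem_S (n := n) hn
    obtain ⟨Q₀, hQ₀S, hmin⟩ := isCompact_S.exists_isMinOn ⟨Qe, hQe⟩
      ((cont_distortedSum d p C).neg.continuousOn)
    have hQ₀ne : Q₀ ≠ 0 := by
      intro h
      have := hQ₀S.2
      rw [h] at this
      simp [posSum] at this
    have hpos : 0 < -(distortedSum d p id Q₀ C) :=
      neg_pos.2 (hS n hn id Function.injective_id Q₀ hQ₀S.1 hQ₀ne)
    refine lt_of_lt_of_le hpos (le_csInf ⟨-(distortedSum d p id Qe C), Qe, hQe.1, hQe.2, rfl⟩ ?_)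
    rintro t ⟨Q, hm, hp1, rfl⟩
    exact isMinOn_iff.mp hmin Q ⟨hm, hp1⟩
  · intro hΔ m hm x hx Q hQ hQ0
    by_cases hb : BddBelow {t : ℝ | ∃ Q : Matrix (Fin n) (Fin n) ℝ, MemO Q ∧ posSum Q = 1 ∧
        t = -(distortedSum d p id Q C)}
    · have hs : 0 < posSum Q := posSum_pos_of_ne_zero hQ.1 hQ0
      have hsinv : (0:ℝ) < (posSum Q)⁻¹ := inv_pos.2 hs
      have hmem : MemO (matExt x ((posSum Q)⁻¹ • Q)) :=
        matExt_memO x hx (memO_smul hQ hsinv.le)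
      have hps : posSum (matExt x ((posSum Q)⁻¹ • Q)) = 1 := by
        rw [posSum_matExt x hx, posSum_smul Q hsinv.le, inv_mul_cancel₀ hs.ne']
      have hD : distortedSum d p id (matExt x ((posSum Q)⁻¹ • Q)) C
          = (posSum Q)⁻¹ * distortedSum d p x Q C := by
        rw [distortedSum_matExt d p C x hx, distortedSum_smul d p x Q C hsinv.le]
      have hle : Delta d p C ≤ -((posSum Q)⁻¹ * distortedSum d p x Q C) := by
        rw [← hD]
        exact csInf_le hb ⟨matExt x ((posSum Q)⁻¹ • Q), hmem, hps, rfl⟩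
      have h2 : 0 < -((posSum Q)⁻¹ * distortedSum d p x Q C) := lt_of_lt_of_le hΔ hle
      nlinarith
    · exfalso
      have : Delta d p C = 0 := Real.sInf_of_not_bddBelow hb
      rw [this] at hΔ
      exact lt_irrefl 0 hΔ
end

section
/- Let (X, d_X) be the Hamming cube H_n with n ≥ 2, and define Q = (q_{x,y})_{x,y ∈ X} by q_{x,y} = n−1 if x = y, q_{x,y} = −1 if d_X(x,y) = 1, q_{x,y} = 1 if d_X(x,y) = n, and q_{x,y} = 0 otherwise. Then Q is symmetric positive semidefinite and Q𝟙 = 0. -/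
open Matrix Finset

namespace S16

variable {n : ℕ}

def e (s x : Fin n → Bool) : ℝ := ∏ i, if s i && x i then -1 else 1

def wt (z : Fin n → Bool) : ℕ := #{i | z i = true}

def coef (s : Fin n → Bool) : ℝ := 2 * wt s + (-1)^(wt s) - 1

lemma sum_prod_bool (f : Fin n → Bool → ℝ) :
    ∑ s : Fin n → Bool, ∏ i, f i (s i) = ∏ i, (f i false + f i true) := by
  classical
  have := Finset.prod_univ_sum (fun _ : Fin n => (Finset.univ : Finset Bool)) f
  rw [Fintype.piFinset_univ] at this
  rw [← this]
  congr 1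
  ext i
  rw [Fintype.sum_bool]
  ring

lemma e_mul_e (s x y : Fin n → Bool) :
    e s x * e s y = e s (fun i => x i != y i) := by
  unfold e
  rw [← Finset.prod_mul_distrib]
  congr 1; ext i
  cases hs : s i <;> cases hx : x i <;> cases hy : y i <;> simp [hs, hx, hy]

lemma e_comm (s x : Fin n → Bool) : e s x = e x s := by
  unfold e; congr 1; ext i; rw [Bool.and_comm]

lemma prod_ite_wt (z : Fin n → Bool) (c : ℝ) :
    (∏ i, if z i then c else 1) = c ^ wt z := by
  classical
  rw [← Finset.prod_filter_mul_prod_filter_not univ (fun i => z i = true)]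
  have h1 : ∀ x ∈ filter (fun x => z x = true) univ, (if z x then c else 1) = c := by
    intro x hx; simp at hx; simp [hx]
  have h2 : ∀ x ∈ filter (fun x => ¬ z x = true) univ, (if z x then c else 1) = 1 := by
    intro x hx; simp at hx; simp [hx]
  rw [Finset.prod_congr rfl h1, Finset.prod_congr rfl h2, Finset.prod_const, Finset.prod_const,
    one_pow, mul_one]
  rfl

lemma wt_eq_zero_iff (z : Fin n → Bool) : wt z = 0 ↔ z = fun _ => false := by
  classical
  simp only [wt, Finset.card_eq_zero, Finset.filter_eq_empty_iff, Finset.mem_univ, true_implies]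
  constructor
  · intro h; funext i; simpa using @h i
  · intro h; subst h; simp

lemma wt_eq_n_iff (z : Fin n → Bool) : wt z = n ↔ z = fun _ => true := by
  classical
  constructor
  · intro h
    have : ({i | z i = true} : Finset (Fin n)) = univ := by
      apply Finset.eq_univ_of_card; simpa [wt] using h
    funext i
    have := Finset.eq_univ_iff_forall.mp this i
    simpa using this
  · intro h; simp [wt, h]

lemma sumA (z : Fin n → Bool) :
    ∑ s : Fin n → Bool, e s z = if z = (fun _ => false) then (2:ℝ)^n else 0 := by
  classical
  calc ∑ s : Fin n → Bool, e s z
      = ∏ i, ((if (false && z i : Bool) then (-1:ℝ) else 1)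
          + (if (true && z i : Bool) then (-1:ℝ) else 1)) :=
        sum_prod_bool (fun i b => if b && z i then (-1:ℝ) else 1)
    _ = ∏ i, (if z i then (0:ℝ) else 2) := by
        apply Finset.prod_congr rfl; intro i _
        cases h : z i <;> simp [h] <;> norm_num
    _ = if z = (fun _ => false) then (2:ℝ)^n else 0 := by
        by_cases h : z = fun _ => false
        · rw [if_pos h, h]; simp
        · rw [if_neg h]
          have : ∃ i, z i = true := by
            by_contra hc; push_neg at hc
            exact h (funext fun i => by simpa using hc i)
          obtain ⟨i, hi⟩ := this
          exact Finset.prod_eq_zero (Finset.mem_univ i) (by simp [hi])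

lemma sumB (z : Fin n → Bool) :
    ∑ s : Fin n → Bool, (-1:ℝ)^(wt s) * e s z
      = if z = (fun _ => true) then (2:ℝ)^n else 0 := by
  classical
  have step : ∀ s : Fin n → Bool, (-1:ℝ)^(wt s) * e s z
      = ∏ i, ((if s i then (-1:ℝ) else 1) * (if s i && z i then (-1:ℝ) else 1)) := by
    intro s
    rw [Finset.prod_mul_distrib, prod_ite_wt]
    rfl
  calc ∑ s : Fin n → Bool, (-1:ℝ)^(wt s) * e s z
      = ∑ s : Fin n → Bool, ∏ i,
          ((fun i b => (if b then (-1:ℝ) else 1) * (if b && z i then (-1:ℝ) else 1)) i (s i)) :=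
        Finset.sum_congr rfl (fun s _ => step s)
    _ = ∏ i, (((if false then (-1:ℝ) else 1) * (if (false && z i : Bool) then (-1:ℝ) else 1))
          + ((if true then (-1:ℝ) else 1) * (if (true && z i : Bool) then (-1:ℝ) else 1))) :=
        sum_prod_bool (fun i b => (if b then (-1:ℝ) else 1) * (if b && z i then (-1:ℝ) else 1))
    _ = ∏ i, (if z i then (2:ℝ) else 0) := by
        apply Finset.prod_congr rfl; intro i _
        cases h : z i <;> simp [h] <;> norm_num
    _ = if z = (fun _ => true) then (2:ℝ)^n else 0 := by
        by_cases h : z = fun _ => true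
        · rw [if_pos h, h]; simp
        · rw [if_neg h]
          have : ∃ i, z i = false := by
            by_contra hc; push_neg at hc
            exact h (funext fun i => by
              have := hc i
              cases hzi : z i
              · exact absurd hzi this
              · rfl)
          obtain ⟨i, hi⟩ := this
          exact Finset.prod_eq_zero (Finset.mem_univ i) (by simp [hi])

lemma prod_split (i : Fin n) (a b : Fin n → ℝ) :
    (∏ j, if j = i then a j else b j) = a i * ∏ j ∈ univ.erase i, b j := by
  rw [← Finset.mul_prod_erase univ _ (Finset.mem_univ i), if_pos rfl]
  congr 1
  apply Finset.prod_congr rfl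
  intro j hj
  rw [if_neg (Finset.mem_erase.mp hj).1]

lemma wt_cast (s : Fin n → Bool) : (wt s : ℝ) = ∑ i, if s i then (1:ℝ) else 0 := by
  classical
  rw [wt, Finset.card_filter]
  push_cast
  rfl

lemma sumC (z : Fin n → Bool) :
    ∑ s : Fin n → Bool, (wt s : ℝ) * e s z =
      if z = (fun _ => false) then (n : ℝ) * 2^(n-1)
      else if wt z = 1 then -(2:ℝ)^(n-1) else 0 := by
  classical
  have hin : ∀ i : Fin n, (∑ s : Fin n → Bool, (if s i then (1:ℝ) else 0) * e s z) =
      (if z i then (-1:ℝ) else 1) * ∏ j ∈ univ.erase i, (if z j then (0:ℝ) else 2) := by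
    intro i
    have step : ∀ s : Fin n → Bool, (if s i then (1:ℝ) else 0) * e s z
        = ∏ j, ((fun j b => (if j = i then (if b then (1:ℝ) else 0) else 1)
            * (if b && z j then (-1:ℝ) else 1)) j (s j)) := by
      intro s
      show _ = ∏ j, ((if j = i then (if s j then (1:ℝ) else 0) else 1)
            * (if s j && z j then (-1:ℝ) else 1))
      rw [Finset.prod_mul_distrib, Finset.prod_ite_eq' univ i (fun j => if s j then (1:ℝ) else 0)]
      simp only [Finset.mem_univ, if_true]
      rfl
    rw [Finset.sum_congr rfl (fun s _ => step s),
      sum_prod_bool (fun j b => (if j = i then (if b then (1:ℝ) else 0) else 1)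
            * (if b && z j then (-1:ℝ) else 1))]
    have factor : ∀ j : Fin n,
        ((if j = i then (if false then (1:ℝ) else 0) else 1) * (if (false && z j : Bool) then (-1:ℝ) else 1))
        + ((if j = i then (if true then (1:ℝ) else 0) else 1) * (if (true && z j : Bool) then (-1:ℝ) else 1))
        = if j = i then (if z j then (-1:ℝ) else 1) else (if z j then (0:ℝ) else 2) := by
      intro j
      by_cases hj : j = i <;> cases hz : z j <;> simp [hj, hz] <;> norm_num
    rw [Finset.prod_congr rfl (fun j _ => factor j), prod_split]
  have swap : ∑ s : Fin n → Bool, (wt s : ℝ) * e s z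
      = ∑ i, ∑ s : Fin n → Bool, (if s i then (1:ℝ) else 0) * e s z := by
    rw [Finset.sum_comm]
    apply Finset.sum_congr rfl
    intro s _
    rw [← Finset.sum_mul, ← wt_cast]
  rw [swap, Finset.sum_congr rfl (fun i _ => hin i)]
  by_cases h0 : z = fun _ => false
  · rw [if_pos h0]
    have hz : ∀ j, z j = false := fun j => by rw [h0]
    have hterm : ∀ i ∈ (univ : Finset (Fin n)),
        ((if z i then (-1:ℝ) else 1) * ∏ j ∈ univ.erase i, (if z j then (0:ℝ) else 2))
          = 2^(n-1) := by
      intro i _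
      simp only [hz, Bool.false_eq_true, if_false, one_mul]
      rw [Finset.prod_const, Finset.card_erase_of_mem (Finset.mem_univ i),
        Finset.card_univ, Fintype.card_fin]
    rw [Finset.sum_congr rfl hterm, Finset.sum_const, Finset.card_univ, Fintype.card_fin,
      nsmul_eq_mul]
  · rw [if_neg h0]
    by_cases h1 : wt z = 1
    · rw [if_pos h1]
      obtain ⟨i0, hi0⟩ := Finset.card_eq_one.mp h1
      have hz : ∀ j, z j = true ↔ j = i0 := by
        intro j
        have : j ∈ filter (fun i => z i = true) univ ↔ j = i0 := by
          rw [hi0, Finset.mem_singleton]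
        simpa using this
      rw [Finset.sum_eq_single i0]
      · rw [if_pos ((hz i0).mpr rfl)]
        have : ∀ j ∈ univ.erase i0, (if z j then (0:ℝ) else 2) = 2 := by
          intro j hj
          have : z j = false := by
            cases hzj : z j
            · rfl
            · exact absurd ((hz j).mp hzj) (Finset.mem_erase.mp hj).1
          simp [this]
        rw [Finset.prod_congr rfl this, Finset.prod_const,
          Finset.card_erase_of_mem (Finset.mem_univ i0), Finset.card_univ, Fintype.card_fin]
        ring
      · intro i _ hii
        apply mul_eq_zero_of_right
        apply Finset.prod_eq_zero (Finset.mem_erase.mpr ⟨Ne.symm hii, Finset.mem_univ i0⟩)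
        · rw [if_pos ((hz i0).mpr rfl)]
      · intro h; exact absurd (Finset.mem_univ i0) h
    · rw [if_neg h1]
      have hge : 1 < wt z := by
        rcases Nat.eq_zero_or_pos (wt z) with h | h
        · exact absurd ((wt_eq_zero_iff z).mp h) h0
        · exact lt_of_le_of_ne h (Ne.symm h1)
      apply Finset.sum_eq_zero
      intro i _
      obtain ⟨j, hj, hji⟩ := Finset.exists_mem_ne hge i
      simp only [mem_filter, Finset.mem_univ, true_and] at hj
      apply mul_eq_zero_of_right
      apply Finset.prod_eq_zero (Finset.mem_erase.mpr ⟨hji, Finset.mem_univ j⟩)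
      rw [if_pos hj]

lemma coef_nonneg (s : Fin n → Bool) : 0 ≤ coef s := by
  unfold coef
  rcases Nat.even_or_odd (wt s) with h | h
  · rw [h.neg_one_pow]
    have : (0:ℝ) ≤ wt s := Nat.cast_nonneg _
    linarith
  · rw [h.neg_one_pow]
    have : (1:ℝ) ≤ wt s := by
      have h1 : wt s ≠ 0 := by rintro h0; rw [h0] at h; simp at h
      exact_mod_cast Nat.one_le_iff_ne_zero.mpr h1
    linarith

lemma key (hn : 2 ≤ n) (z : Fin n → Bool) :
    ∑ s : Fin n → Bool, coef s * e s z =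
      2^n * (if z = (fun _ => false) then (n:ℝ) - 1
        else if wt z = 1 then -1 else if wt z = n then 1 else 0) := by
  classical
  have split : ∑ s : Fin n → Bool, coef s * e s z
      = 2 * (∑ s : Fin n → Bool, (wt s : ℝ) * e s z)
        + (∑ s : Fin n → Bool, (-1:ℝ)^(wt s) * e s z)
        - (∑ s : Fin n → Bool, e s z) := by
    rw [Finset.mul_sum, ← Finset.sum_add_distrib, ← Finset.sum_sub_distrib]
    apply Finset.sum_congr rfl
    intro s _
    unfold coef
    ring
  rw [split, sumA, sumB, sumC]
  have h2 : (2:ℝ) * 2^(n-1) = 2^n := by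
    rw [← pow_succ']
    congr 1
    omega
  have hne : (fun _ : Fin n => false) ≠ (fun _ => true) := by
    intro h
    have := congrFun h ⟨0, by omega⟩
    simp at this
  by_cases h0 : z = fun _ => false
  · have hw0 : wt z = 0 := (wt_eq_zero_iff z).mpr h0
    rw [if_pos h0, if_pos h0, if_neg (h0 ▸ hne), if_pos h0]
    rw [mul_comm ((n:ℝ)) _, ← mul_assoc, h2]
    ring
  · rw [if_neg h0, if_neg h0, if_neg h0]
    by_cases h1 : wt z = 1
    · have hzn : ¬ z = fun _ => true := by
        intro h
        rw [← wt_eq_n_iff] at h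
        omega
      rw [if_pos h1, if_pos h1, if_neg hzn]
      rw [mul_neg, h2]
      ring
    · rw [if_neg h1, if_neg h1]
      by_cases hn' : wt z = n
      · rw [if_pos hn', if_pos ((wt_eq_n_iff z).mp hn')]
        ring
      · rw [if_neg hn', if_neg (fun h => hn' ((wt_eq_n_iff z).mpr h))]
        ring

lemma psd_add {m : Type*} [Fintype m] {A B : Matrix m m ℝ}
    (hA : A.PosSemidef) (hB : B.PosSemidef) : (A + B).PosSemidef := by
  refine ⟨hA.1.add hB.1, fun x => ?_⟩
  simpa [mul_add, add_mul] using add_nonneg (hA.2 x) (hB.2 x)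

lemma psd_vecMulVec {m : Type*} [Fintype m] (v : m → ℝ) :
    (vecMulVec v v).PosSemidef := by
  rw [vecMulVec_eq Unit]
  have : replicateRow Unit v = (replicateCol Unit v)ᴴ := by
    ext i j
    simp [replicateRow, replicateCol, conjTranspose_apply]
  rw [this]
  exact posSemidef_self_mul_conjTranspose _

lemma z_false_iff (x y : Fin n → Bool) :
    ((fun i => x i != y i) = fun _ => false) ↔ x = y := by
  constructor
  · intro h
    funext i
    have := congrFun h i
    simpa using this
  · rintro rfl
    funext i
    simp

lemma wt_bne (x y : Fin n → Bool) : wt (fun i => x i != y i) = hammingDist x y := by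
  unfold wt hammingDist
  congr 1
  apply Finset.filter_congr
  intro i _
  simp

end S16

open S16 in
theorem statement16 (n : ℕ) (hn : 2 ≤ n)
    (Q : Matrix (Fin n → Bool) (Fin n → Bool) ℝ)
    (hQ : ∀ x y : Fin n → Bool, Q x y =
      if x = y then (n : ℝ) - 1
      else if hammingDist x y = 1 then -1
      else if hammingDist x y = n then 1
      else 0) :
    Q.PosSemidef ∧ Q *ᵥ (fun _ => (1 : ℝ)) = 0 := by
  classical
  set w : (Fin n → Bool) → (Fin n → Bool) → ℝ :=
    fun s x => Real.sqrt (coef s / 2^n) * e s x with hw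
  have hc : ∀ s : Fin n → Bool, (0:ℝ) ≤ coef s / 2^n :=
    fun s => div_nonneg (coef_nonneg s) (by positivity)
  have hww : ∀ s x y : Fin n → Bool, w s x * w s y
      = (2^n : ℝ)⁻¹ * (coef s * e s (fun i => x i != y i)) := by
    intro s x y
    have : w s x * w s y = (Real.sqrt (coef s / 2^n) * Real.sqrt (coef s / 2^n))
        * (e s x * e s y) := by rw [hw]; ring
    rw [this, Real.mul_self_sqrt (hc s), e_mul_e, div_eq_inv_mul, mul_assoc]
  have hQ' : Q = ∑ s : Fin n → Bool, vecMulVec (w s) (w s) := by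
    ext x y
    rw [Matrix.sum_apply]
    simp only [vecMulVec_apply]
    rw [Finset.sum_congr rfl (fun s _ => hww s x y), ← Finset.mul_sum,
      key hn (fun i => x i != y i), ← mul_assoc,
      inv_mul_cancel₀ (by positivity : (2:ℝ)^n ≠ 0), one_mul, hQ, wt_bne]
    by_cases hxy : x = y
    · rw [if_pos ((z_false_iff x y).mpr hxy), if_pos hxy]
    · rw [if_neg (fun h => hxy ((z_false_iff x y).mp h)), if_neg hxy]
  constructor
  · rw [hQ']
    apply Finset.sum_induction _ _ (fun a b ha hb => psd_add ha hb) Matrix.PosSemidef.zero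
    intro s _
    exact psd_vecMulVec (w s)
  · rw [hQ']
    ext x
    have hsum : ∀ s : Fin n → Bool, ∑ y : Fin n → Bool, w s y = 0 := by
      intro s
      rw [hw]
      simp only
      rw [← Finset.mul_sum]
      have : ∑ y : Fin n → Bool, e s y = ∑ y : Fin n → Bool, e y s :=
        Finset.sum_congr rfl (fun y _ => e_comm s y)
      rw [this, sumA]
      by_cases hs : s = fun _ => false
      · have : coef s = 0 := by
          have hws : wt s = 0 := by simp [wt, hs]
          simp [coef, hws]
        rw [this]
        simp
      · rw [if_neg hs, mul_zero]
    simp only [Matrix.mulVec, dotProduct, Matrix.sum_apply, vecMulVec_apply, mul_one,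
      Pi.zero_apply]
    rw [Finset.sum_comm]
    apply Finset.sum_eq_zero
    intro s _
    rw [← Finset.mul_sum, hsum s, mul_zero]
end
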